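/- arXiv:2210.16121 — 2 statements merged into one kernel-verified Lean document; each statement's English description precedes it below -/
import Mathlib

section
/- Let Δ be a weakly distance-regular digraph of girth g' whose attached scheme is P-polynomial of girth d+1. If (g',g') is not a realized two-way distance in Δ, then the lexicographic product of Δ with an empty graph is a P-polynomial weakly distance-regular digraph. -/
open scoped Classical

/-- A (finite, possibly directed) digraph given by its adjacency relation. -/
structure DGraph (V : Type*) where
  adj : V → V → Prop

namespace DGraph

variable {V : Type*}

/-- `G.walk n x y` : there is a walk of length `n` from `x` to `y`. -/
def walk (G : DGraph V) : ℕ → V → V → Prop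
  | 0, x, y => x = y
  | n + 1, x, y => ∃ z, G.adj x z ∧ G.walk n z y

def StronglyConnected (G : DGraph V) : Prop := ∀ x y : V, ∃ n, G.walk n x y

/-- Distance: length of a shortest walk (directed). -/
noncomputable def dist (G : DGraph V) (x y : V) : ℕ := sInf {n | G.walk n x y}

/-- Two-way distance `∂̃(x,y) = (∂(x,y), ∂(y,x))`. -/
noncomputable def twoDist (G : DGraph V) (x y : V) : ℕ × ℕ := (G.dist x y, G.dist y x)

/-- Girth: length of a shortest circuit. -/
noncomputable def girth (G : DGraph V) : ℕ := sInf {n | 0 < n ∧ ∃ x, G.walk n x x}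

/-- Diameter: maximum value of the distance function. -/
noncomputable def diam (G : DGraph V) : ℕ := sSup {n | ∃ x y, G.dist x y = n}

/-- No loops. -/
def Simple (G : DGraph V) : Prop := ∀ x, ¬ G.adj x x

/-- The reverse digraph, with all arcs reversed. -/
def reverse (G : DGraph V) : DGraph V := ⟨fun x y => G.adj y x⟩

/-- Lexicographic product of `G` by a complete graph on `n` vertices. -/
def lexComplete (G : DGraph V) (n : ℕ) : DGraph (V × Fin n) :=
  ⟨fun a b => G.adj a.1 b.1 ∨ (a.1 = b.1 ∧ a.2 ≠ b.2)⟩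

/-- Lexicographic product of `G` by an empty graph on `n` vertices. -/
def lexEmpty (G : DGraph V) (n : ℕ) : DGraph (V × Fin n) :=
  ⟨fun a b => G.adj a.1 b.1⟩

end DGraph

/-- Isomorphism of digraphs. -/
def DGraphIso {V W : Type*} (G : DGraph V) (H : DGraph W) : Prop :=
  ∃ e : V ≃ W, ∀ x y, G.adj x y ↔ H.adj (e x) (e y)

/-- A weakly distance-regular digraph: the partition by two-way distance forms an
association scheme, i.e. the intersection numbers depend only on the two-way distances. -/
def IsWDRD {V : Type*} [Fintype V] (G : DGraph V) : Prop :=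
  G.StronglyConnected ∧ G.Simple ∧
  ∀ (i j : ℕ × ℕ) (x y x' y' : V), G.twoDist x y = G.twoDist x' y' →
    Nat.card {z : V // G.twoDist x z = i ∧ G.twoDist z y = j} =
    Nat.card {z : V // G.twoDist x' z = i ∧ G.twoDist z y' = j}

/-- A `d`-class association scheme on `X`, with relations indexed by `0,…,d`
(relations with index `> d` are empty). -/
structure AssocScheme (X : Type*) [Fintype X] (d : ℕ) where
  R : ℕ → X → X → Prop
  R_diag : ∀ x y, R 0 x y ↔ x = y
  R_partition : ∀ x y : X, ∃! i, i ≤ d ∧ R i x y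
  R_empty : ∀ i, d < i → ∀ x y, ¬ R i x y
  star : ℕ → ℕ
  star_le : ∀ i, i ≤ d → star i ≤ d
  R_star : ∀ i x y, R (star i) x y ↔ R i y x
  p : ℕ → ℕ → ℕ → ℕ
  p_spec : ∀ h i j x y, R h x y →
    p h i j = Nat.card {z : X // R i x z ∧ R j z y}

namespace AssocScheme

variable {X : Type*} [Fintype X] {d : ℕ}

/-- The valency `k_i = p^0_{i,i*}`. -/
def k (S : AssocScheme X d) (i : ℕ) : ℕ := S.p 0 i (S.star i)

/-- Adjacency matrix of a relation. -/
noncomputable def adjMat {X : Type*} [Fintype X] (R : X → X → Prop) : Matrix X X ℂ :=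
  Matrix.of fun x y => if R x y then (1 : ℂ) else 0

/-- `S` is P-polynomial with respect to the ordering `R_0, R_1, …, R_d`:
`A_i = v_i(A_1)` with `deg v_i = i`. -/
def IsPPoly (S : AssocScheme X d) : Prop :=
  ∃ v : ℕ → Polynomial ℂ, (∀ i ≤ d, (v i).natDegree = i ∧ v i ≠ 0) ∧
    ∀ i ≤ d, adjMat (S.R i) = Polynomial.aeval (adjMat (S.R 1)) (v i)

/-- Non-symmetric: some relation is non-symmetric. -/
def NonSymmetric (S : AssocScheme X d) : Prop := ∃ i ≤ d, S.star i ≠ i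

end AssocScheme

/-- `S` is the attached scheme of the digraph `G`: each relation of `S`
is a two-way distance class of `G`. -/
def IsAttached {X : Type*} [Fintype X] (G : DGraph X) {d : ℕ} (S : AssocScheme X d) : Prop :=
  ∀ i ≤ d, ∃ ij : ℕ × ℕ, ∀ x y, S.R i x y ↔ G.twoDist x y = ij

/-- `G` is a distance-regular digraph with attached scheme `S`: the distance
relations of `G` form the P-polynomial non-symmetric association scheme `S`
with respect to the distance ordering. -/
structure IsDRDGraph {X : Type*} [Fintype X] (G : DGraph X) (d : ℕ)
    (S : AssocScheme X d) : Prop where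
  sc : G.StronglyConnected
  simple : G.Simple
  rel : ∀ i x y, S.R i x y ↔ (i ≤ d ∧ G.dist x y = i)
  ppoly : S.IsPPoly
  nonsymm : S.NonSymmetric

/-- The directed cycle of length `m`. -/
def cycleDGraph (m : ℕ) : DGraph (ZMod m) := ⟨fun x y => y = x + 1⟩

section Aux

open DGraph

variable {V : Type*}

theorem walk_trans (G : DGraph V) {m k : ℕ} {x y z : V} (h1 : G.walk m x y)
    (h2 : G.walk k y z) : G.walk (m + k) x z := by
  induction m generalizing x with
  | zero => cases h1; simpa using h2
  | succ m ih =>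
    obtain ⟨w, hw, hwalk⟩ := h1
    rw [Nat.add_right_comm]
    exact ⟨w, hw, ih hwalk⟩

theorem walk_dist (G : DGraph V) {x y : V} (h : ∃ m, G.walk m x y) :
    G.walk (G.dist x y) x y := Nat.sInf_mem h

theorem dist_le (G : DGraph V) {m : ℕ} {x y : V} (h : G.walk m x y) :
    G.dist x y ≤ m := Nat.sInf_le h

theorem dist_eq_zero_iff (G : DGraph V) (hsc : G.StronglyConnected) {x y : V} :
    G.dist x y = 0 ↔ x = y := by
  constructor
  · intro h
    have := walk_dist G (hsc x y)
    rw [h] at this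
    exact this
  · rintro rfl; exact Nat.le_zero.mp (dist_le G (show G.walk 0 x x from rfl))

theorem twoDist_self (G : DGraph V) {x : V} (hsc : G.StronglyConnected) :
    G.twoDist x x = (0, 0) := by
  simp [twoDist, (dist_eq_zero_iff G hsc).mpr rfl]

theorem twoDist_ne_zero (G : DGraph V) (hsc : G.StronglyConnected) {x y : V}
    (h : x ≠ y) : G.twoDist x y ≠ (0, 0) := by
  intro hc
  exact h ((dist_eq_zero_iff G hsc).mp (congrArg Prod.fst hc))

end Aux
section Aux2

open DGraph

variable {V : Type*} [Fintype V]

theorem local_girth (G : DGraph V) (hG : IsWDRD G) {g' : ℕ} (hg' : G.girth = g')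
    (hgpos : 0 < g') (x : V) :
    G.walk g' x x ∧ sInf {m | 0 < m ∧ G.walk m x x} = g' := by
  obtain ⟨hsc, hsimple, hcount⟩ := hG
  have hgne : {m | 0 < m ∧ ∃ x, G.walk m x x}.Nonempty := by
    by_contra h
    rw [Set.not_nonempty_iff_eq_empty] at h
    rw [girth, h, Nat.sInf_empty] at hg'
    omega
  have hgmem : 0 < g' ∧ ∃ x₀, G.walk g' x₀ x₀ := by
    have := Nat.sInf_mem hgne
    rwa [show sInf {m | 0 < m ∧ ∃ x, G.walk m x x} = g' from hg'] at this
  obtain ⟨-, x₀, hw₀⟩ := hgmem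
  -- decompose the walk
  obtain ⟨z, hadj, hwz⟩ : ∃ z, G.adj x₀ z ∧ G.walk (g' - 1) z x₀ := by
    have : G.walk (g' - 1 + 1) x₀ x₀ := by
      rwa [Nat.sub_add_cancel hgpos]
    exact this
  have hd1 : G.dist x₀ z = 1 := by
    have hle : G.dist x₀ z ≤ 1 := dist_le G ⟨z, hadj, rfl⟩
    have hne : G.dist x₀ z ≠ 0 := by
      intro h0
      have := (dist_eq_zero_iff G hsc).mp h0
      subst this
      exact hsimple _ hadj
    omega
  have hd2 : G.dist z x₀ = g' - 1 := by
    have hle : G.dist z x₀ ≤ g' - 1 := dist_le G hwz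
    have hw' : G.walk (1 + G.dist z x₀) x₀ x₀ :=
      walk_trans G (show G.walk 1 x₀ z from ⟨z, hadj, rfl⟩) (walk_dist G (hsc z x₀))
    have : g' ≤ 1 + G.dist z x₀ := by
      rw [← hg']
      exact Nat.sInf_le ⟨by omega, x₀, hw'⟩
    omega
  -- transfer to x via the scheme property
  have hcard := hcount (1, g' - 1) (g' - 1, 1) x x x₀ x₀
    (by rw [twoDist_self G hsc, twoDist_self G hsc])
  have hpos : 0 < Nat.card {w : V // G.twoDist x₀ w = (1, g' - 1) ∧
      G.twoDist w x₀ = (g' - 1, 1)} := by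
    rw [Nat.card_pos_iff]
    refine ⟨⟨⟨z, ?_, ?_⟩⟩, inferInstance⟩
    · rw [twoDist, hd1, hd2]
    · rw [twoDist, hd1, hd2]
  rw [← hcard] at hpos
  rw [Nat.card_pos_iff] at hpos
  obtain ⟨⟨⟨w, hw1, _⟩⟩, -⟩ := hpos
  have hdxw : G.dist x w = 1 := congrArg Prod.fst hw1
  have hdwx : G.dist w x = g' - 1 := congrArg Prod.snd hw1
  have hwalkx : G.walk g' x x := by
    have h1 : G.walk 1 x w := by rw [← hdxw]; exact walk_dist G (hsc x w)
    have h2 : G.walk (g' - 1) w x := by rw [← hdwx]; exact walk_dist G (hsc w x)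
    have := walk_trans G h1 h2
    rwa [Nat.add_sub_cancel' hgpos] at this
  refine ⟨hwalkx, le_antisymm (Nat.sInf_le ⟨hgpos, hwalkx⟩) ?_⟩
  have hne : {m | 0 < m ∧ G.walk m x x}.Nonempty := ⟨g', hgpos, hwalkx⟩
  have hmem := Nat.sInf_mem hne
  rw [← hg']
  exact Nat.sInf_le ⟨hmem.1, x, hmem.2⟩

end Aux2
section Aux3

open DGraph

variable {V : Type*} [Fintype V]

theorem walk_lex (G : DGraph V) {n : ℕ} (hn : 0 < n) :
    ∀ (m : ℕ) (p q : V × Fin n),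
      (G.lexEmpty n).walk m p q ↔ (G.walk m p.1 q.1 ∧ (m = 0 → p = q)) := by
  intro m
  induction m with
  | zero =>
    intro p q
    constructor
    · rintro rfl; exact ⟨rfl, fun _ => rfl⟩
    · rintro ⟨h, h0⟩; exact h0 rfl
  | succ m ih =>
    intro p q
    constructor
    · rintro ⟨z, hadj, hwalk⟩
      exact ⟨⟨z.1, hadj, ((ih z q).mp hwalk).1⟩, fun h => absurd h (Nat.succ_ne_zero m)⟩
    · rintro ⟨⟨z, hadj, hwalk⟩, -⟩
      cases m with
      | zero =>
        have hz : z = q.1 := hwalk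
        subst hz
        exact ⟨q, hadj, (ih q q).mpr ⟨rfl, fun _ => rfl⟩⟩
      | succ m =>
        exact ⟨(z, ⟨0, hn⟩), hadj, (ih _ q).mpr ⟨hwalk, by omega⟩⟩

theorem dist_lex_ne (G : DGraph V) {n : ℕ} (hn : 0 < n) {p q : V × Fin n}
    (h : p.1 ≠ q.1) : (G.lexEmpty n).dist p q = G.dist p.1 q.1 := by
  unfold DGraph.dist
  congr 1
  ext m
  simp only [Set.mem_setOf_eq, walk_lex G hn]
  constructor
  · rintro ⟨h1, -⟩; exact h1
  · intro h1
    refine ⟨h1, fun h0 => ?_⟩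
    subst h0
    exact absurd h1 h

theorem sc_lex (G : DGraph V) (hG : IsWDRD G) {g' : ℕ} (hg' : G.girth = g')
    (hgpos : 0 < g') {n : ℕ} (hn : 0 < n) : (G.lexEmpty n).StronglyConnected := by
  intro p q
  by_cases h : p = q
  · subst h; exact ⟨0, rfl⟩
  by_cases h1 : p.1 = q.1
  · obtain ⟨hw, -⟩ := local_girth G hG hg' hgpos p.1
    refine ⟨g', (walk_lex G hn g' p q).mpr ⟨by rw [h1] at hw ⊢; exact hw, fun h0 => absurd h0 (by omega)⟩⟩
  · obtain ⟨m, hm⟩ := hG.1 p.1 q.1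
    by_cases hm0 : m = 0
    · subst hm0; exact absurd hm h1
    · exact ⟨m, (walk_lex G hn m p q).mpr ⟨hm, fun h0 => absurd h0 hm0⟩⟩

theorem dist_lex_fiber (G : DGraph V) (hG : IsWDRD G) {g' : ℕ} (hg' : G.girth = g')
    (hgpos : 0 < g') {n : ℕ} (hn : 0 < n) {p q : V × Fin n}
    (h1 : p.1 = q.1) (h2 : p ≠ q) : (G.lexEmpty n).dist p q = g' := by
  obtain ⟨hw, hloc⟩ := local_girth G hG hg' hgpos p.1
  unfold DGraph.dist
  rw [← hloc]
  congr 1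
  ext m
  simp only [Set.mem_setOf_eq, walk_lex G hn]
  constructor
  · rintro ⟨hwk, h0⟩
    refine ⟨?_, by rw [← h1] at hwk; exact hwk⟩
    rcases Nat.eq_zero_or_pos m with rfl | hpos
    · exact absurd (h0 rfl) h2
    · exact hpos
  · rintro ⟨hpos, hwk⟩
    exact ⟨by rw [← h1]; exact hwk, fun h0 => by omega⟩

theorem twoDist_lex_ne (G : DGraph V) {n : ℕ} (hn : 0 < n) {p q : V × Fin n}
    (h : p.1 ≠ q.1) : (G.lexEmpty n).twoDist p q = G.twoDist p.1 q.1 := by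
  rw [twoDist, twoDist, dist_lex_ne G hn h, dist_lex_ne G hn (Ne.symm h)]

theorem twoDist_lex_fiber (G : DGraph V) (hG : IsWDRD G) {g' : ℕ} (hg' : G.girth = g')
    (hgpos : 0 < g') {n : ℕ} (hn : 0 < n) {p q : V × Fin n}
    (h1 : p.1 = q.1) (h2 : p ≠ q) : (G.lexEmpty n).twoDist p q = (g', g') := by
  rw [twoDist, dist_lex_fiber G hG hg' hgpos hn h1 h2,
    dist_lex_fiber G hG hg' hgpos hn h1.symm (Ne.symm h2)]

theorem twoDist_lex_self (G : DGraph V) (hG : IsWDRD G) {g' : ℕ} (hg' : G.girth = g')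
    (hgpos : 0 < g') {n : ℕ} (hn : 0 < n) (p : V × Fin n) :
    (G.lexEmpty n).twoDist p p = (0, 0) :=
  twoDist_self _ (sc_lex G hG hg' hgpos hn)

end Aux3
section CardAux

open DGraph

theorem card_pt {α : Type*} (a : α) (Q : Prop) :
    Nat.card {z : α // z = a ∧ Q} = if Q then 1 else 0 := by
  split_ifs with hQ
  · have e : {z : α // z = a ∧ Q} ≃ PUnit.{1} :=
      ⟨fun _ => PUnit.unit, fun _ => ⟨a, rfl, hQ⟩,
        by rintro ⟨z, rfl, -⟩; rfl, by intro u; rfl⟩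
    rw [Nat.card_congr e]; simp
  · have : IsEmpty {z : α // z = a ∧ Q} := ⟨fun z => hQ z.2.2⟩
    exact Nat.card_of_isEmpty

theorem card_zero_of_empty {α : Type*} {P : α → Prop} (h : ∀ z, ¬ P z) :
    Nat.card {z : α // P z} = 0 := by
  have : IsEmpty {z : α // P z} := ⟨fun z => h z.1 z.2⟩
  exact Nat.card_of_isEmpty

theorem card_fiber {V : Type*} [Fintype V] {n : ℕ} (P : V → Prop) :
    Nat.card {z : V × Fin n // P z.1} = n * Nat.card {x : V // P x} := by
  have e : {z : V × Fin n // P z.1} ≃ {x : V // P x} × Fin n :=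
    ⟨fun z => (⟨z.1.1, z.2⟩, z.1.2), fun w => ⟨(w.1.1, w.2), w.1.2⟩,
      by rintro ⟨⟨z1, z2⟩, h⟩; rfl, by rintro ⟨⟨x, hx⟩, c⟩; rfl⟩
  rw [Nat.card_congr e, Nat.card_prod, Nat.card_eq_fintype_card (α := Fin n),
    Fintype.card_fin, Nat.mul_comm]

theorem card_fin_fiber {V : Type*} [Fintype V] {n : ℕ} (x : V) (P : Fin n → Prop) :
    Nat.card {z : V × Fin n // z.1 = x ∧ P z.2} = Nat.card {c : Fin n // P c} := by
  refine Nat.card_congr ⟨fun z => ⟨z.1.2, z.2.2⟩, fun c => ⟨(x, c.1), rfl, c.2⟩, ?_, ?_⟩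
  · rintro ⟨⟨z1, z2⟩, rfl, h⟩; rfl
  · rintro ⟨c, hc⟩; rfl

theorem card_fin_ne {n : ℕ} (a : Fin n) : Nat.card {c : Fin n // c ≠ a} = n - 1 := by
  rw [Nat.card_eq_fintype_card]
  have h := Fintype.card_subtype_compl (fun c : Fin n => c = a)
  simp only [Fintype.card_subtype_eq, Fintype.card_fin] at h
  exact h

theorem card_fin_ne2 {n : ℕ} (a b : Fin n) (hab : a ≠ b) :
    Nat.card {c : Fin n // c ≠ a ∧ c ≠ b} = n - 2 := by
  have e : {c : Fin n // c ≠ a ∧ c ≠ b} ≃ {c : Fin n // ¬ (c = a ∨ c = b)} :=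
    Equiv.subtypeEquivRight (by tauto)
  rw [Nat.card_congr e, Nat.card_eq_fintype_card]
  have h := Fintype.card_subtype_compl (fun c : Fin n => c = a ∨ c = b)
  have h2 : Fintype.card {c : Fin n // c = a ∨ c = b} = 2 := by
    have e2 : {c : Fin n // c = a ∨ c = b} ≃ ({a, b} : Finset (Fin n)) :=
      Equiv.subtypeEquivRight (by simp)
    rw [Fintype.card_congr e2, Fintype.card_coe, Finset.card_insert_of_notMem (by simpa using hab),
      Finset.card_singleton]
  rw [h2, Fintype.card_fin] at h
  exact h

end CardAux
section TChar

open DGraph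

variable {V : Type*} [Fintype V] {G : DGraph V} {g' : ℕ} {n : ℕ}

theorem prod_ne_snd {α β : Type*} {p z : α × β} (hne : p ≠ z) (h1 : p.1 = z.1) :
    p.2 ≠ z.2 := fun h2 => hne (Prod.ext h1 h2)

theorem T_zero_iff (hG : IsWDRD G) (hg' : G.girth = g') (hgpos : 0 < g') (hn : 0 < n)
    (p q : V × Fin n) : (G.lexEmpty n).twoDist p q = (0, 0) ↔ p = q := by
  constructor
  · intro h
    by_contra hne
    by_cases h1 : p.1 = q.1
    · rw [twoDist_lex_fiber G hG hg' hgpos hn h1 hne] at h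
      exact absurd (congrArg Prod.fst h) (by simpa using hgpos.ne')
    · rw [twoDist_lex_ne G hn h1] at h
      exact twoDist_ne_zero G hG.1 h1 h
  · rintro rfl
    exact twoDist_lex_self G hG hg' hgpos hn p

theorem T_g_iff (hG : IsWDRD G) (hg' : G.girth = g') (hgpos : 0 < g')
    (hcond : ∀ x y, G.twoDist x y ≠ (g', g')) (hn : 0 < n)
    (p q : V × Fin n) : (G.lexEmpty n).twoDist p q = (g', g') ↔ (p.1 = q.1 ∧ p ≠ q) := by
  constructor
  · intro h
    by_cases h1 : p.1 = q.1
    · refine ⟨h1, fun hpq => ?_⟩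
      subst hpq
      rw [twoDist_lex_self G hG hg' hgpos hn] at h
      exact absurd (congrArg Prod.fst h) (by simpa using hgpos.ne)
    · rw [twoDist_lex_ne G hn h1] at h
      exact absurd h (hcond _ _)
  · rintro ⟨h1, h2⟩
    exact twoDist_lex_fiber G hG hg' hgpos hn h1 h2

theorem T_other_iff (hG : IsWDRD G) (hg' : G.girth = g') (hgpos : 0 < g')
    (hcond : ∀ x y, G.twoDist x y ≠ (g', g')) (hn : 0 < n)
    {t : ℕ × ℕ} (ht0 : t ≠ (0, 0)) (htg : t ≠ (g', g'))
    (p q : V × Fin n) :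
    (G.lexEmpty n).twoDist p q = t ↔ (p.1 ≠ q.1 ∧ G.twoDist p.1 q.1 = t) := by
  constructor
  · intro h
    by_cases h1 : p.1 = q.1
    · by_cases hpq : p = q
      · subst hpq
        rw [twoDist_lex_self G hG hg' hgpos hn] at h
        exact absurd h.symm ht0
      · rw [twoDist_lex_fiber G hG hg' hgpos hn h1 hpq] at h
        exact absurd h.symm htg
    · rw [twoDist_lex_ne G hn h1] at h
      exact ⟨h1, h⟩
  · rintro ⟨h1, h2⟩
    rw [twoDist_lex_ne G hn h1]
    exact h2

theorem base_eq (hG : IsWDRD G) (hg' : G.girth = g') (hgpos : 0 < g')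
    (hcond : ∀ x y, G.twoDist x y ≠ (g', g')) (hn : 0 < n)
    {p q p' q' : V × Fin n}
    (hT : (G.lexEmpty n).twoDist p q = (G.lexEmpty n).twoDist p' q') :
    G.twoDist p.1 q.1 = G.twoDist p'.1 q'.1 := by
  by_cases h1 : p.1 = q.1
  · have h1' : p'.1 = q'.1 := by
      by_cases hpq : p = q
      · subst hpq
        have := ((T_zero_iff hG hg' hgpos hn p' q').mp
          (by rw [← hT, twoDist_lex_self G hG hg' hgpos hn]))
        rw [this]
      · have := ((T_g_iff hG hg' hgpos hcond hn p' q').mp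
          (by rw [← hT, twoDist_lex_fiber G hG hg' hgpos hn h1 hpq]))
        exact this.1
    rw [h1, h1', twoDist_self G hG.1, twoDist_self G hG.1]
  · have h2 : (G.lexEmpty n).twoDist p q = G.twoDist p.1 q.1 := twoDist_lex_ne G hn h1
    have ht0 : G.twoDist p.1 q.1 ≠ (0, 0) := twoDist_ne_zero G hG.1 h1
    have htg : G.twoDist p.1 q.1 ≠ (g', g') := hcond _ _
    have := (T_other_iff hG hg' hgpos hcond hn ht0 htg p' q').mp (by rw [← hT, h2])
    exact this.2.symm

end TChar
section CountFormulas

open DGraph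

variable {V : Type*} [Fintype V] {G : DGraph V} {g' : ℕ} {n : ℕ}


theorem countL1 (hG : IsWDRD G) (hg' : G.girth = g') (hgpos : 0 < g')
    (hcond : ∀ x y, G.twoDist x y ≠ (g', g')) (hn : 0 < n) (j : ℕ × ℕ) (p q : V × Fin n) :
    Nat.card {z : V × Fin n // (G.lexEmpty n).twoDist p z = (0, 0) ∧ (G.lexEmpty n).twoDist z q = j} =
      if (G.lexEmpty n).twoDist p q = j then 1 else 0 := by
  have e : ∀ z : V × Fin n,
      ((G.lexEmpty n).twoDist p z = (0, 0) ∧ (G.lexEmpty n).twoDist z q = j) ↔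
        (z = p ∧ (G.lexEmpty n).twoDist p q = j) := by
    intro z
    constructor
    · rintro ⟨h1, h2⟩
      obtain rfl : p = z := (T_zero_iff hG hg' hgpos hn p z).mp h1
      exact ⟨rfl, h2⟩
    · rintro ⟨rfl, h2⟩
      exact ⟨(T_zero_iff hG hg' hgpos hn z z).mpr rfl, h2⟩
  rw [Nat.card_congr (Equiv.subtypeEquivRight e), card_pt]
  split_ifs <;> rfl

theorem countL2 (hG : IsWDRD G) (hg' : G.girth = g') (hgpos : 0 < g')
    (hcond : ∀ x y, G.twoDist x y ≠ (g', g')) (hn : 0 < n) (i : ℕ × ℕ) (p q : V × Fin n) :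
    Nat.card {z : V × Fin n // (G.lexEmpty n).twoDist p z = i ∧ (G.lexEmpty n).twoDist z q = (0, 0)} =
      if (G.lexEmpty n).twoDist p q = i then 1 else 0 := by
  have e : ∀ z : V × Fin n,
      ((G.lexEmpty n).twoDist p z = i ∧ (G.lexEmpty n).twoDist z q = (0, 0)) ↔
        (z = q ∧ (G.lexEmpty n).twoDist p q = i) := by
    intro z
    constructor
    · rintro ⟨h1, h2⟩
      obtain rfl : z = q := (T_zero_iff hG hg' hgpos hn z q).mp h2
      exact ⟨rfl, h1⟩
    · rintro ⟨rfl, h1⟩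
      exact ⟨h1, (T_zero_iff hG hg' hgpos hn z z).mpr rfl⟩
  rw [Nat.card_congr (Equiv.subtypeEquivRight e), card_pt]
  split_ifs <;> rfl

theorem countL3 (hG : IsWDRD G) (hg' : G.girth = g') (hgpos : 0 < g')
    (hcond : ∀ x y, G.twoDist x y ≠ (g', g')) (hn : 0 < n) (p q : V × Fin n) :
    Nat.card {z : V × Fin n // (G.lexEmpty n).twoDist p z = (g', g') ∧ (G.lexEmpty n).twoDist z q = (g', g')} =
      if (G.lexEmpty n).twoDist p q = (0, 0) then n - 1 else if (G.lexEmpty n).twoDist p q = (g', g') then n - 2 else 0 := by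
  by_cases hpq : p = q
  · subst hpq
    rw [if_pos ((T_zero_iff hG hg' hgpos hn p p).mpr rfl)]
    rw [Nat.card_congr (Equiv.subtypeEquivRight
      (q := fun z => z.1 = p.1 ∧ z.2 ≠ p.2) (fun z => ?_)),
      (card_fin_fiber p.1 (fun c => c ≠ p.2)), card_fin_ne]
    constructor
    · rintro ⟨h1, -⟩
      obtain ⟨ha, hb⟩ := (T_g_iff hG hg' hgpos hcond hn p z).mp h1
      exact ⟨ha.symm, fun h => (prod_ne_snd hb ha) h.symm⟩
    · rintro ⟨h1, h2⟩
      have hzp : p ≠ z := fun h => h2 (congrArg Prod.snd h).symm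
      exact ⟨(T_g_iff hG hg' hgpos hcond hn p z).mpr ⟨h1.symm, hzp⟩,
        (T_g_iff hG hg' hgpos hcond hn z p).mpr ⟨h1, Ne.symm hzp⟩⟩
  · by_cases h1 : p.1 = q.1
    · have hTg : (G.lexEmpty n).twoDist p q = (g', g') := twoDist_lex_fiber G hG hg' hgpos hn h1 hpq
      have hT0 : (G.lexEmpty n).twoDist p q ≠ (0, 0) := by
        rw [hTg]; intro h; exact absurd (congrArg Prod.fst h) (by simpa using hgpos.ne')
      rw [if_neg hT0, if_pos hTg]
      have hsnd : p.2 ≠ q.2 := prod_ne_snd hpq h1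
      rw [Nat.card_congr (Equiv.subtypeEquivRight
        (q := fun z => z.1 = p.1 ∧ z.2 ≠ p.2 ∧ z.2 ≠ q.2) (fun z => ?_)),
        (card_fin_fiber p.1 (fun c => c ≠ p.2 ∧ c ≠ q.2)), card_fin_ne2 _ _ hsnd]
      constructor
      · rintro ⟨ha, hb⟩
        obtain ⟨ha1, ha2⟩ := (T_g_iff hG hg' hgpos hcond hn p z).mp ha
        obtain ⟨hb1, hb2⟩ := (T_g_iff hG hg' hgpos hcond hn z q).mp hb
        exact ⟨ha1.symm, fun h => (prod_ne_snd ha2 ha1) h.symm, prod_ne_snd hb2 hb1⟩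
      · rintro ⟨ha, hb, hc⟩
        have hzp : p ≠ z := fun h => hb (congrArg Prod.snd h).symm
        have hzq : z ≠ q := fun h => hc (congrArg Prod.snd h)
        exact ⟨(T_g_iff hG hg' hgpos hcond hn p z).mpr ⟨ha.symm, hzp⟩,
          (T_g_iff hG hg' hgpos hcond hn z q).mpr ⟨ha.trans h1, hzq⟩⟩
    · have hT0 : (G.lexEmpty n).twoDist p q ≠ (0, 0) := fun h => hpq ((T_zero_iff hG hg' hgpos hn p q).mp h)
      have hTg : (G.lexEmpty n).twoDist p q ≠ (g', g') := fun h =>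
        h1 ((T_g_iff hG hg' hgpos hcond hn p q).mp h).1
      rw [if_neg hT0, if_neg hTg]
      refine card_zero_of_empty (fun z => ?_)
      rintro ⟨ha, hb⟩
      obtain ⟨ha1, -⟩ := (T_g_iff hG hg' hgpos hcond hn p z).mp ha
      obtain ⟨hb1, -⟩ := (T_g_iff hG hg' hgpos hcond hn z q).mp hb
      exact h1 (ha1.trans hb1)

theorem countL4 (hG : IsWDRD G) (hg' : G.girth = g') (hgpos : 0 < g')
    (hcond : ∀ x y, G.twoDist x y ≠ (g', g')) (hn : 0 < n) {j : ℕ × ℕ} (hj0 : j ≠ (0, 0)) (hjg : j ≠ (g', g')) (p q : V × Fin n) :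
    Nat.card {z : V × Fin n // (G.lexEmpty n).twoDist p z = (g', g') ∧ (G.lexEmpty n).twoDist z q = j} =
      if (G.lexEmpty n).twoDist p q = j then n - 1 else 0 := by
  by_cases hc : (G.lexEmpty n).twoDist p q = j
  · obtain ⟨hpq1, hpq2⟩ := (T_other_iff hG hg' hgpos hcond hn hj0 hjg p q).mp hc
    rw [if_pos hc]
    rw [Nat.card_congr (Equiv.subtypeEquivRight
      (q := fun z => z.1 = p.1 ∧ z.2 ≠ p.2) (fun z => ?_)),
      (card_fin_fiber p.1 (fun c => c ≠ p.2)), card_fin_ne]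
    constructor
    · rintro ⟨ha, -⟩
      obtain ⟨ha1, ha2⟩ := (T_g_iff hG hg' hgpos hcond hn p z).mp ha
      exact ⟨ha1.symm, fun h => (prod_ne_snd ha2 ha1) h.symm⟩
    · rintro ⟨ha, hb⟩
      have hzp : p ≠ z := fun h => hb (congrArg Prod.snd h).symm
      refine ⟨(T_g_iff hG hg' hgpos hcond hn p z).mpr ⟨ha.symm, hzp⟩,
        (T_other_iff hG hg' hgpos hcond hn hj0 hjg z q).mpr ⟨?_, ?_⟩⟩
      · rw [ha]; exact hpq1
      · rw [ha]; exact hpq2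
  · rw [if_neg hc]
    refine card_zero_of_empty (fun z => ?_)
    rintro ⟨ha, hb⟩
    obtain ⟨ha1, -⟩ := (T_g_iff hG hg' hgpos hcond hn p z).mp ha
    obtain ⟨hb1, hb2⟩ := (T_other_iff hG hg' hgpos hcond hn hj0 hjg z q).mp hb
    exact hc ((T_other_iff hG hg' hgpos hcond hn hj0 hjg p q).mpr
      ⟨by rw [ha1]; exact hb1, by rw [ha1]; exact hb2⟩)

theorem countL5 (hG : IsWDRD G) (hg' : G.girth = g') (hgpos : 0 < g')
    (hcond : ∀ x y, G.twoDist x y ≠ (g', g')) (hn : 0 < n) {i : ℕ × ℕ} (hi0 : i ≠ (0, 0)) (hig : i ≠ (g', g')) (p q : V × Fin n) :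
    Nat.card {z : V × Fin n // (G.lexEmpty n).twoDist p z = i ∧ (G.lexEmpty n).twoDist z q = (g', g')} =
      if (G.lexEmpty n).twoDist p q = i then n - 1 else 0 := by
  by_cases hc : (G.lexEmpty n).twoDist p q = i
  · obtain ⟨hpq1, hpq2⟩ := (T_other_iff hG hg' hgpos hcond hn hi0 hig p q).mp hc
    rw [if_pos hc]
    rw [Nat.card_congr (Equiv.subtypeEquivRight
      (q := fun z => z.1 = q.1 ∧ z.2 ≠ q.2) (fun z => ?_)),
      (card_fin_fiber q.1 (fun c => c ≠ q.2)), card_fin_ne]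
    constructor
    · rintro ⟨-, hb⟩
      obtain ⟨hb1, hb2⟩ := (T_g_iff hG hg' hgpos hcond hn z q).mp hb
      exact ⟨hb1, prod_ne_snd hb2 hb1⟩
    · rintro ⟨ha, hb⟩
      have hzq : z ≠ q := fun h => hb (congrArg Prod.snd h)
      refine ⟨(T_other_iff hG hg' hgpos hcond hn hi0 hig p z).mpr ⟨?_, ?_⟩,
        (T_g_iff hG hg' hgpos hcond hn z q).mpr ⟨ha, hzq⟩⟩
      · rw [ha]; exact hpq1
      · rw [ha]; exact hpq2
  · rw [if_neg hc]
    refine card_zero_of_empty (fun z => ?_)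
    rintro ⟨ha, hb⟩
    obtain ⟨ha1, ha2⟩ := (T_other_iff hG hg' hgpos hcond hn hi0 hig p z).mp ha
    obtain ⟨hb1, -⟩ := (T_g_iff hG hg' hgpos hcond hn z q).mp hb
    exact hc ((T_other_iff hG hg' hgpos hcond hn hi0 hig p q).mpr
      ⟨by rw [← hb1]; exact ha1, by rw [← hb1]; exact ha2⟩)

theorem countL6 (hG : IsWDRD G) (hg' : G.girth = g') (hgpos : 0 < g')
    (hcond : ∀ x y, G.twoDist x y ≠ (g', g')) (hn : 0 < n) {i j : ℕ × ℕ} (hi0 : i ≠ (0, 0)) (hig : i ≠ (g', g'))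
    (hj0 : j ≠ (0, 0)) (hjg : j ≠ (g', g')) (p q : V × Fin n) :
    Nat.card {z : V × Fin n // (G.lexEmpty n).twoDist p z = i ∧ (G.lexEmpty n).twoDist z q = j} =
      n * Nat.card {x : V // G.twoDist p.1 x = i ∧ G.twoDist x q.1 = j} := by
  rw [Nat.card_congr (Equiv.subtypeEquivRight
    (q := fun z => G.twoDist p.1 z.1 = i ∧ G.twoDist z.1 q.1 = j) (fun z => ?_))]
  · exact card_fiber (fun x => G.twoDist p.1 x = i ∧ G.twoDist x q.1 = j)
  constructor
  · rintro ⟨ha, hb⟩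
    exact ⟨((T_other_iff hG hg' hgpos hcond hn hi0 hig p z).mp ha).2,
      ((T_other_iff hG hg' hgpos hcond hn hj0 hjg z q).mp hb).2⟩
  · rintro ⟨ha, hb⟩
    have h1 : p.1 ≠ z.1 := fun h => hi0 (by rw [← ha, h, twoDist_self G hG.1])
    have h2 : z.1 ≠ q.1 := fun h => hj0 (by rw [← hb, h, twoDist_self G hG.1])
    exact ⟨(T_other_iff hG hg' hgpos hcond hn hi0 hig p z).mpr ⟨h1, ha⟩,
      (T_other_iff hG hg' hgpos hcond hn hj0 hjg z q).mpr ⟨h2, hb⟩⟩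

theorem masterCount (hG : IsWDRD G) (hg' : G.girth = g') (hgpos : 0 < g')
    (hcond : ∀ x y, G.twoDist x y ≠ (g', g')) (hn : 0 < n) (i j : ℕ × ℕ) (p q p' q' : V × Fin n)
    (hT : (G.lexEmpty n).twoDist p q = (G.lexEmpty n).twoDist p' q') :
    Nat.card {z : V × Fin n // (G.lexEmpty n).twoDist p z = i ∧ (G.lexEmpty n).twoDist z q = j} =
    Nat.card {z : V × Fin n // (G.lexEmpty n).twoDist p' z = i ∧ (G.lexEmpty n).twoDist z q' = j} := by
  by_cases hi0 : i = (0, 0)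
  · subst hi0
    rw [countL1 hG hg' hgpos hcond hn j p q, countL1 hG hg' hgpos hcond hn j p' q', hT]
  by_cases hj0 : j = (0, 0)
  · subst hj0
    rw [countL2 hG hg' hgpos hcond hn i p q, countL2 hG hg' hgpos hcond hn i p' q', hT]
  by_cases hig : i = (g', g')
  · subst hig
    by_cases hjg : j = (g', g')
    · subst hjg
      rw [countL3 hG hg' hgpos hcond hn p q, countL3 hG hg' hgpos hcond hn p' q', hT]
    · rw [countL4 hG hg' hgpos hcond hn hj0 hjg p q,
        countL4 hG hg' hgpos hcond hn hj0 hjg p' q', hT]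
  by_cases hjg : j = (g', g')
  · subst hjg
    rw [countL5 hG hg' hgpos hcond hn hi0 hig p q,
      countL5 hG hg' hgpos hcond hn hi0 hig p' q', hT]
  · rw [countL6 hG hg' hgpos hcond hn hi0 hig hj0 hjg p q,
      countL6 hG hg' hgpos hcond hn hi0 hig hj0 hjg p' q',
      hG.2.2 i j p.1 q.1 p'.1 q'.1 (base_eq hG hg' hgpos hcond hn hT)]

end CountFormulas
section SchemeAux

open DGraph AssocScheme

variable {V : Type*} [Fintype V] {d : ℕ}

theorem girth_empty_rel (R : V → V → Prop) (h : ∀ x y, ¬ R x y) :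
    (DGraph.mk R).girth = 0 := by
  unfold DGraph.girth
  convert Nat.sInf_empty
  rw [Set.eq_empty_iff_forall_notMem]
  rintro m ⟨hm, x, hw⟩
  obtain ⟨m, rfl⟩ := Nat.exists_eq_succ_of_ne_zero hm.ne'
  obtain ⟨z, hz, -⟩ := hw
  exact h x z hz

theorem scheme_V_nonempty (S : AssocScheme V d)
    (hSg : (DGraph.mk (S.R 1)).girth = d + 1) : Nonempty V := by
  have hne : {m | 0 < m ∧ ∃ x, (DGraph.mk (S.R 1)).walk m x x}.Nonempty := by
    by_contra h
    rw [Set.not_nonempty_iff_eq_empty] at h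
    rw [DGraph.girth, h, Nat.sInf_empty] at hSg
    omega
  have h := Nat.sInf_mem hne
  obtain ⟨-, x, -⟩ := h
  exact ⟨x⟩

theorem scheme_d_pos (S : AssocScheme V d)
    (hSg : (DGraph.mk (S.R 1)).girth = d + 1) : 1 ≤ d := by
  by_contra h
  have hd0 : d = 0 := by omega
  have : (DGraph.mk (S.R 1)).girth = 0 :=
    girth_empty_rel _ (fun x y => S.R_empty 1 (by omega) x y)
  omega

theorem not_R_diag (S : AssocScheme V d) {i : ℕ} (hi : 1 ≤ i) (hid : i ≤ d) (x : V) :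
    ¬ S.R i x x := by
  intro hR
  obtain ⟨h₀, -, huniq⟩ := S.R_partition x x
  have h1 := huniq i ⟨hid, hR⟩
  have h2 := huniq 0 ⟨Nat.zero_le d, (S.R_diag x x).mpr rfl⟩
  omega

theorem schemeStar_ne_zero (S : AssocScheme V d) {i : ℕ} (hi : 1 ≤ i) (hid : i ≤ d) (x : V) :
    S.star i ≠ 0 := by
  intro h0
  have h := S.R_star i x x
  rw [h0] at h
  exact not_R_diag S hi hid x (h.mp ((S.R_diag x x).mpr rfl))

end SchemeAux

section WalkCount

open DGraph AssocScheme

variable {X : Type*} [Fintype X]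

/-- Number of walks of length `k`. -/
noncomputable def Nw (R : X → X → Prop) : ℕ → X → X → ℕ
  | 0, x, y => if x = y then 1 else 0
  | (k+1), x, y => ∑ z, if R x z then Nw R k z y else 0

theorem adjMat_pow (R : X → X → Prop) (k : ℕ) (x y : X) :
    ((adjMat R) ^ k) x y = (Nw R k x y : ℂ) := by
  induction k generalizing x with
  | zero =>
    rw [pow_zero, Matrix.one_apply]
    by_cases h : x = y <;> simp [Nw, h]
  | succ k ih =>
    rw [pow_succ', Matrix.mul_apply, Nw]
    push_cast
    refine Finset.sum_congr rfl (fun z _ => ?_)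
    rw [ih]
    simp only [adjMat, Matrix.of_apply]
    split_ifs <;> simp

theorem Nw_ne_zero_iff (R : X → X → Prop) (k : ℕ) (x y : X) :
    Nw R k x y ≠ 0 ↔ (DGraph.mk R).walk k x y := by
  induction k generalizing x with
  | zero =>
    rw [Nw]
    split_ifs with h
    · simpa [DGraph.walk] using h
    · simpa [DGraph.walk] using h
  | succ k ih =>
    rw [Nw]
    constructor
    · intro h
      have : ∃ z ∈ Finset.univ, (if R x z then Nw R k z y else 0) ≠ 0 := by
        by_contra hc
        push_neg at hc
        exact h (Finset.sum_eq_zero (fun z hz => hc z hz))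
      obtain ⟨z, -, hz⟩ := this
      by_cases hR : R x z
      · rw [if_pos hR] at hz
        exact ⟨z, hR, (ih z).mp hz⟩
      · rw [if_neg hR] at hz
        exact absurd rfl hz
    · rintro ⟨z, hR, hw⟩
      intro hsum
      have := (Finset.sum_eq_zero_iff).mp hsum z (Finset.mem_univ z)
      rw [if_pos hR] at this
      exact (ih z).mpr hw this

theorem sum_ite_card {P : X → Prop} :
    (∑ z : X, if P z then (1 : ℂ) else 0) = (Nat.card {z : X // P z} : ℂ) := by
  rw [Finset.sum_boole, Nat.card_eq_fintype_card, Fintype.card_subtype]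

theorem boseMesner {d : ℕ} (S : AssocScheme X d) (i j : ℕ) :
    adjMat (S.R i) * adjMat (S.R j) =
      ∑ h ∈ Finset.range (d + 1), (S.p h i j : ℂ) • adjMat (S.R h) := by
  ext x y
  obtain ⟨h₀, ⟨hh₀d, hh₀R⟩, huniq⟩ := S.R_partition x y
  rw [Matrix.mul_apply, Matrix.sum_apply]
  have hL : (∑ z, adjMat (S.R i) x z * adjMat (S.R j) z y) =
      (Nat.card {z : X // S.R i x z ∧ S.R j z y} : ℂ) := by
    rw [← sum_ite_card]
    refine Finset.sum_congr rfl (fun z _ => ?_)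
    simp only [adjMat, Matrix.of_apply]
    split_ifs <;> simp_all
  rw [hL, ← S.p_spec h₀ i j x y hh₀R]
  rw [Finset.sum_eq_single h₀]
  · simp only [Matrix.smul_apply, adjMat, Matrix.of_apply, if_pos hh₀R, smul_eq_mul, mul_one]
  · intro h hmem hne
    have hhd : h ≤ d := by
      have := Finset.mem_range.mp hmem
      omega
    have : ¬ S.R h x y := fun hR => hne (huniq h ⟨hhd, hR⟩)
    simp only [Matrix.smul_apply, adjMat, Matrix.of_apply, if_neg this, smul_eq_mul, mul_zero]
  · intro hmem
    exact absurd (Finset.mem_range.mpr (by omega)) hmem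

theorem A1_pow_span {d : ℕ} (S : AssocScheme X d) (hd : 1 ≤ d) :
    ∀ m : ℕ, 1 ≤ m → ∃ γ : ℕ → ℂ,
      (adjMat (S.R 1)) ^ m = ∑ h ∈ Finset.range (d + 1), γ h • adjMat (S.R h) := by
  intro m
  induction m with
  | zero => omega
  | succ m ih =>
    intro _
    by_cases hm : 1 ≤ m
    · obtain ⟨γ, hγ⟩ := ih hm
      refine ⟨fun g => ∑ h ∈ Finset.range (d + 1), γ h * (S.p g 1 h : ℂ), ?_⟩
      rw [pow_succ', hγ, Finset.mul_sum]
      have : ∀ h ∈ Finset.range (d + 1),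
          adjMat (S.R 1) * (γ h • adjMat (S.R h)) =
          ∑ g ∈ Finset.range (d + 1), (γ h * (S.p g 1 h : ℂ)) • adjMat (S.R g) := by
        intro h _
        rw [Matrix.mul_smul, boseMesner S 1 h, Finset.smul_sum]
        refine Finset.sum_congr rfl (fun g _ => ?_)
        rw [smul_smul]
      rw [Finset.sum_congr rfl this, Finset.sum_comm]
      refine Finset.sum_congr rfl (fun g _ => ?_)
      rw [Finset.sum_smul]
    · have hm0 : m = 0 := by omega
      subst hm0
      refine ⟨fun g => if g = 1 then 1 else 0, ?_⟩
      rw [pow_one]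
      rw [Finset.sum_eq_single 1]
      · simp
      · intro h _ hne
        simp [hne]
      · intro hmem
        exact absurd (Finset.mem_range.mpr (by omega)) hmem

end WalkCount
section Lift

open DGraph AssocScheme Polynomial

variable {V : Type*} [Fintype V] {n : ℕ}

/-- Lift of a matrix along the projection `V × Fin n → V`. -/
noncomputable def Lmat (n : ℕ) (M : Matrix V V ℂ) : Matrix (V × Fin n) (V × Fin n) ℂ :=
  Matrix.of fun p q => M p.1 q.1

theorem Lmat_add (M N : Matrix V V ℂ) : Lmat n (M + N) = Lmat n M + Lmat n N := by
  ext p q; simp [Lmat]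

theorem Lmat_smul (c : ℂ) (M : Matrix V V ℂ) : Lmat n (c • M) = c • Lmat n M := by
  ext p q; simp [Lmat]

theorem Lmat_sum {ι : Type*} (s : Finset ι) (f : ι → Matrix V V ℂ) :
    Lmat n (∑ i ∈ s, f i) = ∑ i ∈ s, Lmat n (f i) := by
  ext p q
  simp only [Lmat, Matrix.of_apply, Matrix.sum_apply]

theorem Lmat_mul (M N : Matrix V V ℂ) :
    Lmat n M * Lmat n N = (n : ℂ) • Lmat n (M * N) := by
  ext p q
  simp only [Lmat, Matrix.mul_apply, Matrix.of_apply, Matrix.smul_apply, smul_eq_mul]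
  rw [Fintype.sum_prod_type]
  simp only [Finset.sum_const, Finset.card_univ, Fintype.card_fin, nsmul_eq_mul]
  rw [Finset.mul_sum]

theorem Lmat_pow [DecidableEq (V × Fin n)] (M : Matrix V V ℂ) (k : ℕ) (hk : 1 ≤ k) :
    (Lmat n M) ^ k = ((n : ℂ) ^ (k - 1)) • Lmat n (M ^ k) := by
  induction k with
  | zero => omega
  | succ k ih =>
    by_cases hk1 : 1 ≤ k
    · have h1 : k - 1 + 1 = k := by omega
      rw [pow_succ, ih hk1, Matrix.smul_mul, Lmat_mul, smul_smul, ← pow_succ, h1,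
        Nat.add_sub_cancel, ← pow_succ]
    · have : k = 0 := by omega
      subst this
      simp

/-- Scaled polynomial: coefficient `a_k` becomes `a_k / n^(k-1)`. -/
noncomputable def pscale (n : ℕ) (f : Polynomial ℂ) : Polynomial ℂ :=
  ∑ k ∈ Finset.range (f.natDegree + 1), C (f.coeff k * ((n : ℂ) ^ (k - 1))⁻¹) * X ^ k

theorem pscale_coeff (f : Polynomial ℂ) (m : ℕ) :
    (pscale n f).coeff m = f.coeff m * ((n : ℂ) ^ (m - 1))⁻¹ := by
  unfold pscale
  rw [Polynomial.finset_sum_coeff]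
  simp only [Polynomial.coeff_C_mul, Polynomial.coeff_X_pow, mul_ite, mul_one, mul_zero]
  by_cases hm : m ∈ Finset.range (f.natDegree + 1)
  · rw [Finset.sum_eq_single m]
    · rw [if_pos rfl]
    · intro k _ hne; rw [if_neg (Ne.symm hne)]
    · intro h; exact absurd hm h
  · rw [Finset.sum_eq_zero]
    · have : f.coeff m = 0 := by
        apply Polynomial.coeff_eq_zero_of_natDegree_lt
        have := Finset.mem_range.not.mp hm
        omega
      rw [this, zero_mul]
    · intro k hk
      have : m ≠ k := by
        intro h
        subst h
        exact hm hk
      rw [if_neg this]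

theorem pscale_natDegree (hn : 0 < n) (f : Polynomial ℂ) (hf : f ≠ 0) :
    (pscale n f).natDegree = f.natDegree ∧ pscale n f ≠ 0 := by
  have hnc : (n : ℂ) ≠ 0 := Nat.cast_ne_zero.mpr hn.ne'
  have htop : (pscale n f).coeff f.natDegree ≠ 0 := by
    rw [pscale_coeff]
    exact mul_ne_zero (Polynomial.leadingCoeff_ne_zero.mpr hf) (inv_ne_zero (pow_ne_zero _ hnc))
  have hne : pscale n f ≠ 0 := fun h => htop (by rw [h, Polynomial.coeff_zero])
  refine ⟨le_antisymm ?_ (Polynomial.le_natDegree_of_ne_zero htop), hne⟩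
  rw [Polynomial.natDegree_le_iff_coeff_eq_zero]
  intro m hm
  rw [pscale_coeff, Polynomial.coeff_eq_zero_of_natDegree_lt hm, zero_mul]

theorem pscale_aeval [DecidableEq (V × Fin n)] (hn : 0 < n) (A : Matrix V V ℂ) (f : Polynomial ℂ)
    (hc0 : f.coeff 0 = 0) :
    Polynomial.aeval (Lmat n A) (pscale n f) = Lmat n (Polynomial.aeval A f) := by
  have hnc : (n : ℂ) ≠ 0 := Nat.cast_ne_zero.mpr hn.ne'
  have hdeg : (pscale n f).natDegree ≤ f.natDegree := by
    rw [Polynomial.natDegree_le_iff_coeff_eq_zero]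
    intro m hm
    rw [pscale_coeff, Polynomial.coeff_eq_zero_of_natDegree_lt hm, zero_mul]
  rw [Polynomial.aeval_eq_sum_range' (Nat.lt_succ_of_le hdeg),
    Polynomial.aeval_eq_sum_range (p := f)]
  rw [Lmat_sum]
  refine Finset.sum_congr rfl (fun k hk => ?_)
  rw [pscale_coeff]
  by_cases hk0 : k = 0
  · subst hk0
    rw [hc0, zero_mul, zero_smul, zero_smul]
    ext p q
    simp [Lmat]
  · have hk1 : 1 ≤ k := by omega
    rw [Lmat_pow A k hk1, Lmat_smul, smul_smul]
    congr 1
    field_simp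

end Lift
section LiftScheme

open DGraph AssocScheme Polynomial

variable {V : Type*} [Fintype V] {d : ℕ}

/-- Relations of the lifted scheme on `V × Fin n`. -/
def liftR (S : AssocScheme V d) (n : ℕ) : ℕ → (V × Fin n) → (V × Fin n) → Prop :=
  fun i p q =>
    if i = 0 then p = q
    else if i ≤ d then S.R i p.1 q.1
    else if i = d + 1 then p.1 = q.1 ∧ p.2 ≠ q.2
    else False

variable {S : AssocScheme V d} {n : ℕ}

theorem liftR_zero (p q : V × Fin n) : liftR S n 0 p q ↔ p = q := by
  simp [liftR]

theorem liftR_mid {i : ℕ} (hi : 1 ≤ i) (hid : i ≤ d) (p q : V × Fin n) :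
    liftR S n i p q ↔ S.R i p.1 q.1 := by
  have : i ≠ 0 := by omega
  simp [liftR, this, hid]

theorem liftR_top (p q : V × Fin n) :
    liftR S n (d + 1) p q ↔ (p.1 = q.1 ∧ p.2 ≠ q.2) := by
  have h1 : d + 1 ≠ 0 := by omega
  have h2 : ¬ d + 1 ≤ d := by omega
  simp [liftR, h1, h2]

theorem liftR_empty {i : ℕ} (hi : d + 1 < i) (p q : V × Fin n) : ¬ liftR S n i p q := by
  have h1 : i ≠ 0 := by omega
  have h2 : ¬ i ≤ d := by omega
  have h3 : i ≠ d + 1 := by omega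
  simp [liftR, h1, h2, h3]

theorem T_never_01 {G : DGraph V} (hG : IsWDRD G) {g' : ℕ} (hg' : G.girth = g')
    (hgpos : 0 < g') (hn : 0 < n) (p q : V × Fin n) :
    (G.lexEmpty n).twoDist p q ≠ (0, 1) := by
  intro h
  have h0 : (G.lexEmpty n).dist p q = 0 := congrArg Prod.fst h
  have hpq : p = q := (dist_eq_zero_iff _ (sc_lex G hG hg' hgpos hn)).mp h0
  subst hpq
  have := twoDist_lex_self G hG hg' hgpos hn p
  rw [this] at h
  exact absurd (congrArg Prod.snd h) (by simp)

theorem relclass {G : DGraph V} (hG : IsWDRD G) (hAtt : IsAttached G S)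
    {g' : ℕ} (hg' : G.girth = g') (hgpos : 0 < g')
    (hcond : ∀ x y, G.twoDist x y ≠ (g', g')) (hn : 0 < n) (hd : 1 ≤ d) (i : ℕ) :
    ∃ ι : ℕ × ℕ, ∀ p q : V × Fin n,
      liftR S n i p q ↔ (G.lexEmpty n).twoDist p q = ι := by
  by_cases hi0 : i = 0
  · subst hi0
    exact ⟨(0, 0), fun p q =>
      (liftR_zero p q).trans (T_zero_iff hG hg' hgpos hn p q).symm⟩
  by_cases hid : i ≤ d
  · have hi1 : 1 ≤ i := by omega
    by_cases hR : ∃ x y, S.R i x y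
    · obtain ⟨x, y, hxy⟩ := hR
      obtain ⟨ij, hij⟩ := hAtt i hid
      have hreal : G.twoDist x y = ij := (hij x y).mp hxy
      have hij0 : ij ≠ (0, 0) := by
        intro h
        subst h
        have hdist : G.dist x y = 0 := congrArg Prod.fst hreal
        have hxy' : x = y := (dist_eq_zero_iff G hG.1).mp hdist
        subst hxy'
        exact not_R_diag S hi1 hid x hxy
      have hijg : ij ≠ (g', g') := hreal ▸ hcond x y
      refine ⟨ij, fun p q => ?_⟩
      rw [liftR_mid hi1 hid, hij, T_other_iff hG hg' hgpos hcond hn hij0 hijg]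
      constructor
      · intro h
        refine ⟨fun heq => ?_, h⟩
        rw [heq] at h
        rw [twoDist_self G hG.1] at h
        exact hij0 h.symm
      · exact And.right
    · push_neg at hR
      refine ⟨(0, 1), fun p q => ?_⟩
      rw [liftR_mid hi1 hid]
      exact iff_of_false (hR p.1 q.1) (T_never_01 hG hg' hgpos hn p q)
  by_cases hitop : i = d + 1
  · subst hitop
    refine ⟨(g', g'), fun p q => ?_⟩
    rw [liftR_top, T_g_iff hG hg' hgpos hcond hn]
    constructor
    · rintro ⟨h1, h2⟩
      exact ⟨h1, fun h => h2 (congrArg Prod.snd h)⟩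
    · rintro ⟨h1, h2⟩
      exact ⟨h1, prod_ne_snd h2 h1⟩
  · refine ⟨(0, 1), fun p q => ?_⟩
    exact iff_of_false (liftR_empty (by omega) p q) (T_never_01 hG hg' hgpos hn p q)

theorem adj_liftR_zero [DecidableEq (V × Fin n)] :
    adjMat (liftR S n 0) = (1 : Matrix (V × Fin n) (V × Fin n) ℂ) := by
  ext p q
  rw [Matrix.one_apply]
  simp only [adjMat, Matrix.of_apply]
  exact if_congr (liftR_zero p q) rfl rfl

theorem adj_liftR_mid {i : ℕ} (hi : 1 ≤ i) (hid : i ≤ d) :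
    adjMat (liftR S n i) = Lmat n (adjMat (S.R i)) := by
  ext p q
  simp only [adjMat, Lmat, Matrix.of_apply]
  exact if_congr (liftR_mid hi hid p q) rfl rfl

theorem adjR0_eq_one : adjMat (S.R 0) = (1 : Matrix V V ℂ) := by
  ext x y
  rw [Matrix.one_apply]
  simp only [adjMat, Matrix.of_apply]
  exact if_congr (S.R_diag x y) rfl rfl

theorem Lmat_one_eq [DecidableEq (V × Fin n)] :
    Lmat n (1 : Matrix V V ℂ) =
      adjMat (liftR S n 0) + adjMat (liftR S n (d + 1)) := by
  ext p q
  simp only [Lmat, Matrix.of_apply, Matrix.add_apply, adjMat, Matrix.one_apply]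
  by_cases h1 : p.1 = q.1
  · by_cases h2 : p = q
    · rw [if_pos h1, if_pos ((liftR_zero p q).mpr h2),
        if_neg (fun hc => ((liftR_top p q).mp hc).2 (congrArg Prod.snd h2))]
      norm_num
    · rw [if_pos h1, if_neg (fun hc => h2 ((liftR_zero p q).mp hc)),
        if_pos ((liftR_top p q).mpr ⟨h1, prod_ne_snd h2 h1⟩)]
      norm_num
  · have h2 : p ≠ q := fun h => h1 (congrArg Prod.fst h)
    rw [if_neg h1, if_neg (fun hc => h2 ((liftR_zero p q).mp hc)),
      if_neg (fun hc => h1 ((liftR_top p q).mp hc).1)]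
    norm_num

theorem A1_diag_zero (hSg : (DGraph.mk (S.R 1)).girth = d + 1)
    {m : ℕ} (hm1 : 1 ≤ m) (hmd : m ≤ d) (x : V) :
    ((adjMat (S.R 1)) ^ m) x x = 0 := by
  rw [adjMat_pow, Nat.cast_eq_zero]
  by_contra h
  have hw := (Nw_ne_zero_iff (S.R 1) m x x).mp h
  have : (DGraph.mk (S.R 1)).girth ≤ m := Nat.sInf_le ⟨by omega, x, hw⟩
  omega

theorem A1_closed_walk (hSg : (DGraph.mk (S.R 1)).girth = d + 1) :
    ∃ x : V, (DGraph.mk (S.R 1)).walk (d + 1) x x := by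
  have hne : {m | 0 < m ∧ ∃ x, (DGraph.mk (S.R 1)).walk m x x}.Nonempty := by
    by_contra h
    rw [Set.not_nonempty_iff_eq_empty] at h
    rw [DGraph.girth, h, Nat.sInf_empty] at hSg
    omega
  have h := Nat.sInf_mem hne
  rw [show sInf {m | 0 < m ∧ ∃ x, (DGraph.mk (S.R 1)).walk m x x} = d + 1 from hSg] at h
  exact h.2

theorem gamma0_ne_zero (hSg : (DGraph.mk (S.R 1)).girth = d + 1) (hd : 1 ≤ d)
    {γ : ℕ → ℂ}
    (hγ : (adjMat (S.R 1)) ^ (d + 1) =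
      ∑ h ∈ Finset.range (d + 1), γ h • adjMat (S.R h)) : γ 0 ≠ 0 := by
  obtain ⟨x, hw⟩ := A1_closed_walk hSg
  have hne : ((adjMat (S.R 1)) ^ (d + 1)) x x ≠ 0 := by
    rw [adjMat_pow, Nat.cast_ne_zero]
    exact (Nw_ne_zero_iff (S.R 1) (d + 1) x x).mpr hw
  intro h0
  apply hne
  rw [hγ, Matrix.sum_apply]
  refine Finset.sum_eq_zero (fun h hmem => ?_)
  rw [Matrix.smul_apply]
  by_cases hh0 : h = 0
  · subst hh0
    rw [h0, zero_smul]
  · have hhd : h ≤ d := by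
      have := Finset.mem_range.mp hmem
      omega
    have : ¬ S.R h x x := not_R_diag S (by omega) hhd x
    simp only [adjMat, Matrix.of_apply, if_neg this, smul_zero]

theorem coeff0_zero (hSg : (DGraph.mk (S.R 1)).girth = d + 1) (x₀ : V)
    {v : ℕ → Polynomial ℂ} (hvdeg : ∀ i ≤ d, (v i).natDegree = i ∧ v i ≠ 0)
    (hveval : ∀ i ≤ d, adjMat (S.R i) = Polynomial.aeval (adjMat (S.R 1)) (v i))
    {i : ℕ} (hi : 1 ≤ i) (hid : i ≤ d) : (v i).coeff 0 = 0 := by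
  have hdiag : adjMat (S.R i) x₀ x₀ = 0 := by
    simp only [adjMat, Matrix.of_apply, if_neg (not_R_diag S hi hid x₀)]
  rw [hveval i hid, Polynomial.aeval_eq_sum_range, Matrix.sum_apply] at hdiag
  rw [Finset.sum_eq_single 0] at hdiag
  · rw [pow_zero, Matrix.smul_apply, Matrix.one_apply_eq, smul_eq_mul, mul_one] at hdiag
    exact hdiag
  · intro k hmem hk0
    have hkd : k ≤ d := by
      have := Finset.mem_range.mp hmem
      have := (hvdeg i hid).1
      omega
    rw [Matrix.smul_apply, A1_diag_zero hSg (by omega) hkd, smul_zero]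
  · intro h
    exact absurd (Finset.mem_range.mpr (by omega)) h

end LiftScheme
section PTop

open DGraph AssocScheme Polynomial

variable {V : Type*} [Fintype V] {d : ℕ} {S : AssocScheme V d} {n : ℕ}

/-- The polynomial giving the top relation of the lifted scheme. -/
noncomputable def ptop (n d : ℕ) (γ : ℕ → ℂ) (v : ℕ → Polynomial ℂ) : Polynomial ℂ :=
  Polynomial.C (γ 0)⁻¹ * (Polynomial.C (((n : ℂ) ^ d)⁻¹) * Polynomial.X ^ (d + 1) -
    ∑ h ∈ Finset.Ico 1 (d + 1), Polynomial.C (γ h) * pscale n (v h)) - 1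

theorem ptop_degree (hn : 0 < n) {γ : ℕ → ℂ} (hγ0 : γ 0 ≠ 0)
    {v : ℕ → Polynomial ℂ} (hvdeg : ∀ i ≤ d, (v i).natDegree = i ∧ v i ≠ 0) :
    (ptop n d γ v).natDegree = d + 1 ∧ ptop n d γ v ≠ 0 := by
  have hnc : (n : ℂ) ≠ 0 := Nat.cast_ne_zero.mpr hn.ne'
  set Ssum := ∑ h ∈ Finset.Ico 1 (d + 1), Polynomial.C (γ h) * pscale n (v h) with hSsum
  have hS : Ssum.natDegree ≤ d := by
    refine Polynomial.natDegree_sum_le_of_forall_le _ _ (fun h hmem => ?_)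
    obtain ⟨h1, h2⟩ := Finset.mem_Ico.mp hmem
    refine le_trans (Polynomial.natDegree_C_mul_le _ _) ?_
    rw [(pscale_natDegree hn (v h) (hvdeg h (by omega)).2).1, (hvdeg h (by omega)).1]
    omega
  have hcoef : (ptop n d γ v).coeff (d + 1) = (γ 0)⁻¹ * ((n : ℂ) ^ d)⁻¹ := by
    unfold ptop
    rw [Polynomial.coeff_sub, Polynomial.coeff_C_mul, Polynomial.coeff_sub,
      Polynomial.coeff_C_mul, Polynomial.coeff_X_pow, if_pos rfl,
      Polynomial.coeff_eq_zero_of_natDegree_lt (lt_of_le_of_lt hS (by omega)),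
      Polynomial.coeff_one]
    norm_num
  have hcne : (ptop n d γ v).coeff (d + 1) ≠ 0 := by
    rw [hcoef]
    exact mul_ne_zero (inv_ne_zero hγ0) (inv_ne_zero (pow_ne_zero _ hnc))
  have hne : ptop n d γ v ≠ 0 := fun h => hcne (by rw [h, Polynomial.coeff_zero])
  refine ⟨le_antisymm ?_ (Polynomial.le_natDegree_of_ne_zero hcne), hne⟩
  unfold ptop
  refine le_trans (Polynomial.natDegree_sub_le _ _) ?_
  rw [Polynomial.natDegree_one]
  refine max_le (le_trans (Polynomial.natDegree_C_mul_le _ _) ?_) (by omega)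
  refine le_trans (Polynomial.natDegree_sub_le _ _) ?_
  refine max_le (le_trans (Polynomial.natDegree_C_mul_le _ _) ?_) (le_trans hS (by omega))
  exact le_of_eq (Polynomial.natDegree_X_pow _)

theorem ptop_eval [DecidableEq (V × Fin n)] (hSg : (DGraph.mk (S.R 1)).girth = d + 1) (hd : 1 ≤ d) (hn : 0 < n) (x₀ : V)
    {v : ℕ → Polynomial ℂ} (hvdeg : ∀ i ≤ d, (v i).natDegree = i ∧ v i ≠ 0)
    (hveval : ∀ i ≤ d, adjMat (S.R i) = Polynomial.aeval (adjMat (S.R 1)) (v i))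
    {γ : ℕ → ℂ} (hγ0 : γ 0 ≠ 0)
    (hγ : (adjMat (S.R 1)) ^ (d + 1) =
      ∑ h ∈ Finset.range (d + 1), γ h • adjMat (S.R h)) :
    Polynomial.aeval (adjMat (liftR S n 1)) (ptop n d γ v) =
      adjMat (liftR S n (d + 1)) := by
  have hnc : (n : ℂ) ≠ 0 := Nat.cast_ne_zero.mpr hn.ne'
  have hB : adjMat (liftR S n 1) = Lmat n (adjMat (S.R 1)) := adj_liftR_mid le_rfl hd
  have hevalS : ∀ h ∈ Finset.Ico 1 (d + 1),
      Polynomial.aeval (adjMat (liftR S n 1)) (Polynomial.C (γ h) * pscale n (v h)) =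
        γ h • Lmat n (adjMat (S.R h)) := by
    intro h hmem
    obtain ⟨h1, h2⟩ := Finset.mem_Ico.mp hmem
    have hhd : h ≤ d := by omega
    rw [map_mul, Polynomial.aeval_C, hB,
      pscale_aeval hn _ (v h) (coeff0_zero hSg x₀ hvdeg hveval h1 hhd),
      ← hveval h hhd, ← Algebra.smul_def]
  rw [ptop]
  rw [map_sub, map_mul, Polynomial.aeval_C, map_sub, map_mul, Polynomial.aeval_C,
    map_pow, Polynomial.aeval_X, map_sum, map_one]
  rw [Finset.sum_congr rfl hevalS]
  rw [hB, Lmat_pow _ (d + 1) (by omega), Nat.add_sub_cancel]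
  rw [hγ, Finset.range_eq_Ico, Finset.sum_eq_sum_Ico_succ_bot (by omega : 0 < d + 1)]
  rw [Lmat_add, Lmat_smul]
  rw [show Lmat n (∑ h ∈ Finset.Ico 1 (d + 1), γ h • adjMat (S.R h)) =
      ∑ h ∈ Finset.Ico 1 (d + 1), γ h • Lmat n (adjMat (S.R h)) from by
    rw [Lmat_sum]
    exact Finset.sum_congr rfl (fun h _ => Lmat_smul _ _)]
  rw [← Algebra.smul_def, ← Algebra.smul_def]
  rw [smul_smul, smul_add, smul_smul]
  rw [inv_mul_cancel₀ (pow_ne_zero d hnc), one_mul, one_smul, add_sub_cancel_right,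
    smul_smul, inv_mul_cancel₀ hγ0, one_smul, adjR0_eq_one, Lmat_one_eq, adj_liftR_zero,
    add_sub_cancel_left]

end PTop
open DGraph AssocScheme in
theorem stmt10 {V : Type*} [Fintype V] {d : ℕ} (G : DGraph V) (S : AssocScheme V d)
    (hG : IsWDRD G) (hAtt : IsAttached G S) (hP : S.IsPPoly)
    {g' : ℕ} (hg' : G.girth = g')
    (hSg : (DGraph.mk (S.R 1)).girth = d + 1)
    (hcond : ∀ x y, G.twoDist x y ≠ (g', g'))
    (n : ℕ) (hn : 0 < n) :
    IsWDRD (G.lexEmpty n) ∧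
    ∃ (d' : ℕ) (S' : AssocScheme (V × Fin n) d'),
      IsAttached (G.lexEmpty n) S' ∧ S'.IsPPoly := by
  have hd : 1 ≤ d := scheme_d_pos S hSg
  obtain ⟨x₀⟩ : Nonempty V := scheme_V_nonempty S hSg
  have hgpos : 0 < g' := by
    rcases Nat.eq_zero_or_pos g' with h0 | h
    · exfalso
      apply hcond x₀ x₀
      rw [twoDist_self G hG.1, h0]
    · exact h
  have hWDRD' : IsWDRD (G.lexEmpty n) :=
    ⟨sc_lex G hG hg' hgpos hn, fun p hp => hG.2.1 p.1 hp,
      fun i j p q p' q' hT => masterCount hG hg' hgpos hcond hn i j p q p' q' hT⟩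
  have hrel := relclass (S := S) hG hAtt hg' hgpos hcond hn hd
  refine ⟨hWDRD', d + 1,
    { R := liftR S n
      R_diag := fun p q => liftR_zero p q
      R_partition := ?_
      R_empty := fun i hi p q => liftR_empty hi p q
      star := fun i => if i = 0 then 0 else if i ≤ d then S.star i else i
      star_le := ?_
      R_star := ?_
      p := fun h i j =>
        if hE : ∃ pq : (V × Fin n) × (V × Fin n), liftR S n h pq.1 pq.2 then
          Nat.card {z : V × Fin n //
            liftR S n i hE.choose.1 z ∧ liftR S n j z hE.choose.2}
        else 0
      p_spec := ?_ }, ?_, ?_⟩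
  -- R_partition
  · intro p q
    by_cases hp1 : p.1 = q.1
    · by_cases hpq : p = q
      · subst hpq
        refine ⟨0, ⟨Nat.zero_le _, (liftR_zero p p).mpr rfl⟩, ?_⟩
        rintro j ⟨hjle, hjR⟩
        by_contra hj0
        by_cases hjd : j ≤ d
        · exact not_R_diag S (by omega) hjd p.1 ((liftR_mid (by omega) hjd p p).mp hjR)
        · have hjtop : j = d + 1 := by omega
          subst hjtop
          exact ((liftR_top p p).mp hjR).2 rfl
      · refine ⟨d + 1, ⟨le_refl _, (liftR_top p q).mpr ⟨hp1, prod_ne_snd hpq hp1⟩⟩, ?_⟩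
        rintro j ⟨hjle, hjR⟩
        by_contra hjtop
        by_cases hj0 : j = 0
        · subst hj0
          exact hpq ((liftR_zero p q).mp hjR)
        · have hjd : j ≤ d := by omega
          exact not_R_diag S (by omega) hjd p.1
            (by have := (liftR_mid (by omega) hjd p q).mp hjR; rwa [← hp1] at this)
    · obtain ⟨i₀, ⟨hi₀d, hi₀R⟩, huniq⟩ := S.R_partition p.1 q.1
      have hi₀0 : i₀ ≠ 0 := fun h => hp1 ((S.R_diag p.1 q.1).mp (h ▸ hi₀R))
      refine ⟨i₀, ⟨by omega, (liftR_mid (by omega) hi₀d p q).mpr hi₀R⟩, ?_⟩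
      rintro j ⟨hjle, hjR⟩
      by_cases hj0 : j = 0
      · subst hj0
        exact absurd (congrArg Prod.fst ((liftR_zero p q).mp hjR)) hp1
      by_cases hjd : j ≤ d
      · exact huniq j ⟨hjd, (liftR_mid (by omega) hjd p q).mp hjR⟩
      · have hjtop : j = d + 1 := by omega
        subst hjtop
        exact absurd ((liftR_top p q).mp hjR).1 hp1
  -- star_le
  · intro i hi
    split_ifs with h0 hdle
    · omega
    · exact le_trans (S.star_le i hdle) (by omega)
    · omega
  -- R_star
  · intro i p q
    split_ifs with h0 hdle
    · subst h0
      rw [liftR_zero, liftR_zero]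
      exact eq_comm
    · have hi1 : 1 ≤ i := by omega
      have hs1 : 1 ≤ S.star i :=
        Nat.one_le_iff_ne_zero.mpr (schemeStar_ne_zero S hi1 hdle p.1)
      rw [liftR_mid hs1 (S.star_le i hdle), liftR_mid hi1 hdle]
      exact S.R_star i p.1 q.1
    · by_cases htop : i = d + 1
      · subst htop
        rw [liftR_top, liftR_top]
        constructor
        · rintro ⟨a, b⟩; exact ⟨a.symm, Ne.symm b⟩
        · rintro ⟨a, b⟩; exact ⟨a.symm, Ne.symm b⟩
      · exact iff_of_false (liftR_empty (by omega) p q) (liftR_empty (by omega) q p)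
  -- p_spec
  · intro h i j x y hR
    have hE : ∃ pq : (V × Fin n) × (V × Fin n), liftR S n h pq.1 pq.2 := ⟨(x, y), hR⟩
    rw [dif_pos hE]
    obtain ⟨ιh, hιh⟩ := hrel h
    obtain ⟨ιi, hιi⟩ := hrel i
    obtain ⟨ιj, hιj⟩ := hrel j
    have hTxy : (G.lexEmpty n).twoDist x y = ιh := (hιh x y).mp hR
    have hTc : (G.lexEmpty n).twoDist hE.choose.1 hE.choose.2 = ιh :=
      (hιh _ _).mp hE.choose_spec
    calc Nat.card {z : V × Fin n //
          liftR S n i hE.choose.1 z ∧ liftR S n j z hE.choose.2}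
        = Nat.card {z : V × Fin n //
            (G.lexEmpty n).twoDist hE.choose.1 z = ιi ∧
            (G.lexEmpty n).twoDist z hE.choose.2 = ιj} :=
          Nat.card_congr (Equiv.subtypeEquivRight
            (fun z => and_congr (hιi _ z) (hιj z _)))
      _ = Nat.card {z : V × Fin n //
            (G.lexEmpty n).twoDist x z = ιi ∧ (G.lexEmpty n).twoDist z y = ιj} :=
          masterCount hG hg' hgpos hcond hn ιi ιj _ _ x y (by rw [hTc, hTxy])
      _ = Nat.card {z : V × Fin n // liftR S n i x z ∧ liftR S n j z y} :=
          (Nat.card_congr (Equiv.subtypeEquivRight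
            (fun z => and_congr (hιi x z) (hιj z y)))).symm
  -- IsAttached
  · intro i hi
    exact hrel i
  -- IsPPoly
  · letI : DecidableEq (V × Fin n) := fun a b => Classical.propDecidable (a = b)
    obtain ⟨v, hvdeg, hveval⟩ := hP
    obtain ⟨γ, hγ⟩ := A1_pow_span S hd (d + 1) (by omega)
    have hγ0 := gamma0_ne_zero hSg hd hγ
    refine ⟨fun i => if i = 0 then 1 else if i ≤ d then pscale n (v i) else ptop n d γ v,
      ?_, ?_⟩
    · intro i hi
      dsimp only
      split_ifs with h0 hdle
      · subst h0
        exact ⟨Polynomial.natDegree_one, one_ne_zero⟩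
      · obtain ⟨h1, h2⟩ := pscale_natDegree hn (v i) (hvdeg i hdle).2
        exact ⟨h1.trans (hvdeg i hdle).1, h2⟩
      · have : i = d + 1 := by omega
        subst this
        exact ptop_degree hn hγ0 hvdeg
    · intro i hi
      dsimp only
      split_ifs with h0 hdle
      · subst h0
        rw [Polynomial.aeval_one]
        exact adj_liftR_zero
      · have h1 : 1 ≤ i := by omega
        rw [adj_liftR_mid h1 hdle, adj_liftR_mid le_rfl hd,
          pscale_aeval hn _ (v i) (coeff0_zero hSg x₀ hvdeg hveval h1 hdle),
          ← hveval i hdle]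
      · have : i = d + 1 := by omega
        subst this
        exact (ptop_eval hSg hd hn x₀ hvdeg hveval hγ0 hγ).symm
end

section
/- Let X = (X,{R_i}_{i=0}^{g}) be a P-polynomial non-symmetric association scheme of girth g with d = g arising from a long-type distance-regular digraph (X,R_1). Then (X,R_1) is a lexicographic product of a distance-regular digraph of diameter g−1 by an empty graph; consequently k_1 = k_g + 1 implies (X,R_1) is a lexicographic product of a directed g-cycle by an empty graph. -/
open scoped Classical

/- ========================= auxiliary development ========================= -/

namespace DGraph

variable {V : Type*} {G : DGraph V}

lemma walk_trans : ∀ {m n : ℕ} {x y z : V}, G.walk m x y → G.walk n y z →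
    G.walk (m + n) x z := by
  intro m
  induction m with
  | zero => intro n x y z h1 h2; cases h1; simpa using h2
  | succ m ih =>
    intro n x y z h1 h2
    obtain ⟨w, hw, hww⟩ := h1
    exact (by omega : m + 1 + n = (m + n) + 1) ▸ ⟨w, hw, ih hww h2⟩

lemma walk_split : ∀ {m n : ℕ} {x y : V}, G.walk (m + n) x y →
    ∃ z, G.walk m x z ∧ G.walk n z y := by
  intro m
  induction m with
  | zero => intro n x y h; exact ⟨x, rfl, by simpa using h⟩
  | succ m ih =>
    intro n x y h
    rw [(by omega : m + 1 + n = (m + n) + 1)] at h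
    obtain ⟨w, hw, hww⟩ := h
    obtain ⟨z, hz1, hz2⟩ := ih hww
    exact ⟨z, ⟨w, hw, hz1⟩, hz2⟩

lemma dist_le_of_walk {n : ℕ} {x y : V} (h : G.walk n x y) : G.dist x y ≤ n :=
  Nat.sInf_le h

lemma walk_dist {x y : V} (h : ∃ n, G.walk n x y) : G.walk (G.dist x y) x y :=
  Nat.sInf_mem h

lemma dist_self (x : V) : G.dist x x = 0 :=
  Nat.le_antisymm (dist_le_of_walk (show G.walk 0 x x from rfl)) (Nat.zero_le _)

lemma eq_of_dist_eq_zero {x y : V} (h : ∃ n, G.walk n x y) (hd : G.dist x y = 0) :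
    x = y := by
  have := walk_dist h
  rw [hd] at this
  exact this

lemma dist_triangle (hsc : G.StronglyConnected) (x y z : V) :
    G.dist x z ≤ G.dist x y + G.dist y z :=
  dist_le_of_walk (walk_trans (walk_dist (hsc x y)) (walk_dist (hsc y z)))

lemma adj_of_dist_eq_one {x y : V} (h : ∃ n, G.walk n x y) (hd : G.dist x y = 1) :
    G.adj x y := by
  have := walk_dist h
  rw [hd] at this
  obtain ⟨z, hz, hz2⟩ := this
  cases hz2
  exact hz

lemma dist_eq_one_of_adj (hs : G.Simple) {x y : V} (h : G.adj x y) : G.dist x y = 1 := by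
  have h1 : G.dist x y ≤ 1 := dist_le_of_walk ⟨y, h, rfl⟩
  have h0 : G.dist x y ≠ 0 := by
    intro h0
    have hxy := eq_of_dist_eq_zero ⟨1, y, h, rfl⟩ h0
    exact hs x (hxy ▸ h)
  omega

end DGraph


namespace Stmt19Aux

open DGraph AssocScheme Matrix

variable {X : Type} [Fintype X] {g : ℕ} {S : AssocScheme X g}

local notation "G" => DGraph.mk (S.R 1)

lemma dist_le_g (hDR : IsDRDGraph G g S) (x y : X) : (G).dist x y ≤ g := by
  obtain ⟨i, ⟨hig, hR⟩, _⟩ := S.R_partition x y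
  have := (hDR.rel i x y).1 hR
  omega

lemma sigma_dist (hDR : IsDRDGraph G g S) (x y : X) :
    (G).dist y x = S.star ((G).dist x y) := by
  have h1 : S.R ((G).dist x y) x y := (hDR.rel _ x y).2 ⟨dist_le_g hDR x y, rfl⟩
  have h2 : S.R (S.star ((G).dist x y)) y x := (S.R_star _ y x).2 h1
  exact ((hDR.rel _ y x).1 h2).2

lemma sigma_sigma (hDR : IsDRDGraph G g S) (x y : X) :
    S.star (S.star ((G).dist x y)) = (G).dist x y := by
  rw [← sigma_dist hDR x y, ← sigma_dist hDR y x]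

lemma k_spec (hDR : IsDRDGraph G g S) {i : ℕ} (hi : i ≤ g) (x : X) :
    S.k i = Nat.card {z : X // (G).dist x z = i} := by
  have h0 : S.R 0 x x := (S.R_diag x x).2 rfl
  rw [AssocScheme.k, S.p_spec 0 i (S.star i) x x h0]
  apply Nat.card_congr
  apply Equiv.subtypeEquivRight
  intro z
  constructor
  · rintro ⟨h1, _⟩; exact ((hDR.rel i x z).1 h1).2
  · intro h
    have hR : S.R i x z := (hDR.rel i x z).2 ⟨hi, h⟩
    exact ⟨hR, (S.R_star i z x).2 hR⟩

lemma g_ne_zero (hDR : IsDRDGraph G g S) : g ≠ 0 := by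
  intro h
  obtain ⟨i, hi, hne⟩ := hDR.nonsymm
  have := S.star_le i hi
  omega

lemma girth_attained (hDR : IsDRDGraph G g S) (hg : (G).girth = g) :
    ∃ x : X, (G).walk g x x := by
  have hne : {n | 0 < n ∧ ∃ x : X, (G).walk n x x}.Nonempty := by
    by_contra h
    rw [Set.not_nonempty_iff_eq_empty] at h
    unfold DGraph.girth at hg
    rw [h, Nat.sInf_empty] at hg
    exact g_ne_zero hDR hg.symm
  have := Nat.sInf_mem hne
  unfold DGraph.girth at hg
  rw [hg] at this
  exact this.2

lemma girth_le (hDR : IsDRDGraph G g S) (hg : (G).girth = g) {n : ℕ} {x : X}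
    (hn : 0 < n) (h : (G).walk n x x) : g ≤ n := by
  rw [← hg]
  exact Nat.sInf_le ⟨hn, x, h⟩

lemma dist_ne_zero (hDR : IsDRDGraph G g S) {x y : X} (hxy : x ≠ y) :
    (G).dist x y ≠ 0 := fun h => hxy (eq_of_dist_eq_zero (hDR.sc x y) h)

lemma dist_rev_lower (hDR : IsDRDGraph G g S) (hg : (G).girth = g) {x y : X}
    (hxy : x ≠ y) : g ≤ (G).dist x y + (G).dist y x := by
  have hw : (G).walk ((G).dist x y + (G).dist y x) x x :=
    walk_trans (walk_dist (hDR.sc x y)) (walk_dist (hDR.sc y x))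
  have h0 : (G).dist x y ≠ 0 := dist_ne_zero hDR hxy
  exact girth_le hDR hg (by omega) hw

lemma three_le_g (hDR : IsDRDGraph G g S) (hg : (G).girth = g) : 3 ≤ g := by
  have hg0 : g ≠ 0 := g_ne_zero hDR
  obtain ⟨x0, hx0⟩ := girth_attained hDR hg
  have hstar0 : S.star 0 = 0 := by
    have := sigma_dist hDR x0 x0
    simp only [DGraph.dist_self] at this
    exact this.symm
  by_contra hlt
  push_neg at hlt
  rcases (by omega : g = 1 ∨ g = 2) with hcase|hcase
  · -- g = 1 : walk 1 x0 x0 is a loop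
    subst hcase
    obtain ⟨z, hz, hz2⟩ := hx0
    have hzz : z = x0 := hz2
    exact hDR.simple x0 (hzz ▸ hz)
  · -- g = 2
    subst hcase
    obtain ⟨z, hz, hz2⟩ := hx0
    obtain ⟨w, hw, hw2⟩ := hz2
    have hwx : w = x0 := hw2
    have hw' : (DGraph.mk (S.R 1)).adj z x0 := hwx ▸ hw
    have hzx : z ≠ x0 := fun h => hDR.simple x0 (h ▸ hz)
    have d1 : (DGraph.mk (S.R 1)).dist x0 z = 1 := dist_eq_one_of_adj hDR.simple hz
    have d2 : (DGraph.mk (S.R 1)).dist z x0 = 1 := dist_eq_one_of_adj hDR.simple hw'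
    have hstar1 : S.star 1 = 1 := by
      have := sigma_dist hDR x0 z
      rw [d1, d2] at this; exact this.symm
    obtain ⟨i, hi, hne⟩ := hDR.nonsymm
    have hs2 : S.star 2 ≤ 2 := S.star_le 2 (by omega)
    have hi2 : i = 2 := by
      rcases (by omega : i = 0 ∨ i = 1 ∨ i = 2) with h|h|h <;> subst h <;> simp_all
    subst hi2
    have : S.star 2 = 0 ∨ S.star 2 = 1 := by omega
    rcases this with h|h
    · have hR0 : S.R 0 x0 x0 := (S.R_diag x0 x0).2 rfl
      have : S.R 2 x0 x0 := (S.R_star 2 x0 x0).1 (h ▸ hR0)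
      have := ((hDR.rel 2 x0 x0).1 this).2
      rw [DGraph.dist_self] at this; omega
    · have hR1 : S.R 1 x0 z := (hDR.rel 1 x0 z).2 ⟨by omega, d1⟩
      have : S.R 2 z x0 := (S.R_star 2 x0 z).1 (h ▸ hR1)
      have := ((hDR.rel 2 z x0).1 this).2
      omega

lemma exists_dist_g (hDR : IsDRDGraph G g S) (hg : (G).girth = g) (hd : (G).diam = g) :
    ∃ x y : X, (G).dist x y = g := by
  obtain ⟨x0, _⟩ := girth_attained hDR hg
  have hne : {n | ∃ x y : X, (G).dist x y = n}.Nonempty := ⟨0, x0, x0, DGraph.dist_self x0⟩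
  have hbdd : BddAbove {n | ∃ x y : X, (G).dist x y = n} := by
    refine ⟨g, fun n hn => ?_⟩
    obtain ⟨x, y, h⟩ := hn
    exact h ▸ dist_le_g hDR x y
  obtain ⟨x, y, h⟩ := Nat.sSup_mem hne hbdd
  exact ⟨x, y, h.trans hd⟩

lemma realize (hDR : IsDRDGraph G g S) (hg : (G).girth = g) (hd : (G).diam = g)
    {i : ℕ} (hi : i ≤ g) : ∃ x y : X, (G).dist x y = i := by
  obtain ⟨x, y, hxy⟩ := exists_dist_g hDR hg hd
  have hw : (G).walk g x y := by
    have := walk_dist (hDR.sc x y); rwa [hxy] at this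
  have hw2 : (G).walk (i + (g - i)) x y := by
    rw [(by omega : i + (g - i) = g)]; exact hw
  obtain ⟨z, hz1, hz2⟩ := walk_split hw2
  refine ⟨x, z, ?_⟩
  have l1 : (G).dist x z ≤ i := dist_le_of_walk hz1
  have l2 : (G).dist z y ≤ g - i := dist_le_of_walk hz2
  have l3 := dist_triangle hDR.sc x z y
  omega

lemma sigma_one (hDR : IsDRDGraph G g S) (hg : (G).girth = g) :
    S.star 1 = g - 1 := by
  have hg3 := three_le_g hDR hg
  obtain ⟨x0, hx0⟩ := girth_attained hDR hg
  have hx0' : (G).walk (1 + (g - 1)) x0 x0 := by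
    rw [(by omega : 1 + (g - 1) = g)]; exact hx0
  obtain ⟨z, hz1, hz2⟩ := walk_split hx0'
  obtain ⟨w, hw, hw2⟩ := hz1
  have hwz : w = z := hw2
  have hw' : (G).adj x0 z := hwz ▸ hw
  have hzx : z ≠ x0 := fun h => hDR.simple x0 (h ▸ hw')
  have d1 : (G).dist x0 z = 1 := dist_eq_one_of_adj hDR.simple hw'
  have l1 : (G).dist z x0 ≤ g - 1 := dist_le_of_walk hz2
  have l2 : g ≤ (G).dist x0 z + (G).dist z x0 := dist_rev_lower hDR hg hzx.symm
  have := sigma_dist hDR x0 z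
  rw [d1] at this
  omega

lemma sigma_invol (hDR : IsDRDGraph G g S) (hg : (G).girth = g) (hd : (G).diam = g)
    {i : ℕ} (hi : i ≤ g) : S.star (S.star i) = i := by
  obtain ⟨x, y, hxy⟩ := realize hDR hg hd hi
  have := sigma_sigma hDR x y
  rwa [hxy] at this

lemma sigma_mid (hDR : IsDRDGraph G g S) (hg : (G).girth = g) (hd : (G).diam = g)
    {i : ℕ} (h1 : 1 ≤ i) (h2 : i ≤ g - 1) : S.star i = g - i := by
  have hg3 := three_le_g hDR hg
  -- lower bound
  obtain ⟨x, y, hxy⟩ := realize hDR hg hd (show i ≤ g by omega)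
  have hxyne : x ≠ y := by
    intro h; rw [h, DGraph.dist_self] at hxy; omega
  have lo : g ≤ i + (G).dist y x := by
    have := dist_rev_lower hDR hg hxyne; omega
  have hsd : (G).dist y x = S.star i := by
    have := sigma_dist hDR x y; rwa [hxy] at this
  -- upper bound
  obtain ⟨u, v, huv⟩ := realize hDR hg hd (show g - 1 ≤ g by omega)
  have hw : (G).walk (g - 1) u v := by
    have := walk_dist (hDR.sc u v); rwa [huv] at this
  have hw2 : (G).walk (i + (g - 1 - i)) u v := by
    rw [(by omega : i + (g - 1 - i) = g - 1)]; exact hw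
  obtain ⟨z, hz1, hz2⟩ := walk_split hw2
  have l1 : (G).dist u z ≤ i := dist_le_of_walk hz1
  have l2 : (G).dist z v ≤ g - 1 - i := dist_le_of_walk hz2
  have l3 := dist_triangle hDR.sc u z v
  have duz : (G).dist u z = i := by omega
  have hstarg1 : S.star (g - 1) = 1 := by
    have h1 := sigma_invol hDR hg hd (show (1:ℕ) ≤ g by omega)
    rwa [sigma_one hDR hg] at h1
  have hvu : (G).dist v u = 1 := by
    have h5 := sigma_dist hDR u v
    rwa [huv, hstarg1] at h5
  have l4 := dist_triangle hDR.sc z v u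
  have hzu : (G).dist z u = S.star i := by
    have := sigma_dist hDR u z; rwa [duz] at this
  omega

lemma sigma_g (hDR : IsDRDGraph G g S) (hg : (G).girth = g) (hd : (G).diam = g) :
    S.star g = g := by
  have hg3 := three_le_g hDR hg
  obtain ⟨x, y, hxy⟩ := exists_dist_g hDR hg hd
  have hsd : (G).dist y x = S.star g := by
    have := sigma_dist hDR x y; rwa [hxy] at this
  have hback : (G).dist x y = S.star ((G).dist y x) := sigma_dist hDR y x
  have hle : (G).dist y x ≤ g := dist_le_g hDR y x
  rcases (by omega : (G).dist y x = 0 ∨ (1 ≤ (G).dist y x ∧ (G).dist y x ≤ g - 1) ∨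
    (G).dist y x = g) with h|⟨ha, hb⟩|h
  · exact absurd (eq_of_dist_eq_zero (hDR.sc y x) h ▸ hxy) (by rw [DGraph.dist_self]; omega)
  · rw [sigma_mid hDR hg hd ha hb] at hback; omega
  · omega


lemma sigma_g1 (hDR : IsDRDGraph G g S) (hg : (G).girth = g) (hd : (G).diam = g) :
    S.star (g - 1) = 1 := by
  have h1 := sigma_invol hDR hg hd (show (1:ℕ) ≤ g by have := three_le_g hDR hg; omega)
  rwa [sigma_one hDR hg] at h1

lemma dist_rev_mid (hDR : IsDRDGraph G g S) (hg : (G).girth = g) (hd : (G).diam = g)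
    {x y : X} {i : ℕ} (hi1 : 1 ≤ i) (hi2 : i ≤ g - 1) (h : (G).dist x y = i) :
    (G).dist y x = g - i := by
  have := sigma_dist hDR x y
  rwa [h, sigma_mid hDR hg hd hi1 hi2] at this

lemma dist_rev_g (hDR : IsDRDGraph G g S) (hg : (G).girth = g) (hd : (G).diam = g)
    {x y : X} (h : (G).dist x y = g) : (G).dist y x = g := by
  have := sigma_dist hDR x y
  rwa [h, sigma_g hDR hg hd] at this

lemma adj_rev (hDR : IsDRDGraph G g S) (hg : (G).girth = g) (hd : (G).diam = g)
    {x y : X} (h : (G).adj x y) : (G).dist y x = g - 1 := by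
  have h1 : (G).dist x y = 1 := dist_eq_one_of_adj hDR.simple h
  have := sigma_dist hDR x y
  rwa [h1, sigma_one hDR hg] at this

lemma natCard_eq_filter (P : X → Prop) :
    Nat.card {z : X // P z} = (Finset.univ.filter P).card := by
  rw [Nat.card_eq_fintype_card, Fintype.card_subtype]

lemma adjMat_mul_apply (R1 R2 : X → X → Prop) (x y : X) :
    (AssocScheme.adjMat R1 * AssocScheme.adjMat R2) x y
      = (Nat.card {z : X // R1 x z ∧ R2 z y} : ℂ) := by
  rw [Matrix.mul_apply]
  have : ∀ z : X, AssocScheme.adjMat R1 x z * AssocScheme.adjMat R2 z y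
      = if R1 x z ∧ R2 z y then (1:ℂ) else 0 := by
    intro z
    by_cases h1 : R1 x z <;> by_cases h2 : R2 z y <;>
      simp [AssocScheme.adjMat, h1, h2]
  rw [Finset.sum_congr rfl (fun z _ => this z), Finset.sum_boole,
    natCard_eq_filter]
  norm_num
  congr!

lemma adjMat_row_sum (R1 : X → X → Prop) (x : X) :
    ∑ y : X, AssocScheme.adjMat R1 x y = (Nat.card {y : X // R1 x y} : ℂ) := by
  have : ∀ y : X, AssocScheme.adjMat R1 x y = if R1 x y then (1:ℂ) else 0 := by
    intro y; by_cases h : R1 x y <;> simp [AssocScheme.adjMat, h]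
  rw [Finset.sum_congr rfl (fun y _ => this y), Finset.sum_boole, natCard_eq_filter]

lemma adjMat_apply (R1 : X → X → Prop) (x y : X) :
    AssocScheme.adjMat R1 x y = if R1 x y then (1:ℂ) else 0 := rfl

lemma card_dist_i (hDR : IsDRDGraph G g S) {i : ℕ} (hi : i ≤ g) (x : X) :
    Nat.card {z : X // S.R i x z} = S.k i := by
  rw [k_spec hDR hi x]
  apply Nat.card_congr
  exact Equiv.subtypeEquivRight (fun z => by
    rw [hDR.rel]
    exact ⟨fun h => h.2, fun h => ⟨hi, h⟩⟩)

lemma matE1 (hDR : IsDRDGraph G g S) (hg : (G).girth = g) (hd : (G).diam = g) :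
    AssocScheme.adjMat (S.R 1) * AssocScheme.adjMat (S.R g)
      = (S.p 1 1 g : ℂ) • AssocScheme.adjMat (S.R 1)
        + (S.p g 1 g : ℂ) • AssocScheme.adjMat (S.R g) := by
  have hg3 := three_le_g hDR hg
  ext x y
  rw [adjMat_mul_apply]
  simp only [Matrix.add_apply, Matrix.smul_apply, adjMat_apply, smul_eq_mul]
  have hle : (G).dist x y ≤ g := dist_le_g hDR x y
  by_cases h1 : (G).dist x y = 1
  · have hR : S.R 1 x y := (hDR.rel 1 x y).2 ⟨by omega, h1⟩
    have hRg : ¬ S.R g x y := by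
      rw [hDR.rel]; rintro ⟨-, h⟩; omega
    rw [← S.p_spec 1 1 g x y hR, if_pos hR, if_neg hRg]
    ring
  by_cases h2 : (G).dist x y = g
  · have hR : S.R g x y := (hDR.rel g x y).2 ⟨le_rfl, h2⟩
    have hR1 : ¬ S.R 1 x y := by
      rw [hDR.rel]; rintro ⟨-, h⟩; omega
    rw [← S.p_spec g 1 g x y hR, if_pos hR, if_neg hR1]
    ring
  · -- off support : both sides vanish
    have hR1 : ¬ S.R 1 x y := by rw [hDR.rel]; rintro ⟨-, h⟩; omega
    have hRg : ¬ S.R g x y := by rw [hDR.rel]; rintro ⟨-, h⟩; omega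
    rw [if_neg hR1, if_neg hRg]
    have hempty : ∀ z : X, ¬ (S.R 1 x z ∧ S.R g z y) := by
      rintro z ⟨ha, hb⟩
      have hxz : (G).dist x z = 1 := ((hDR.rel 1 x z).1 ha).2
      have hzy : (G).dist z y = g := ((hDR.rel g z y).1 hb).2
      have hadj : (G).adj x z := adj_of_dist_eq_one (hDR.sc x z) hxz
      by_cases h0 : (G).dist x y = 0
      · -- x = y, but dist z x = g - 1 ≠ g
        have hxy := eq_of_dist_eq_zero (hDR.sc x y) h0
        have := adj_rev hDR hg hd hadj
        rw [← hxy] at hzy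
        omega
      · -- 2 ≤ dist x y ≤ g - 1
        have hyx : (G).dist y x = g - (G).dist x y :=
          dist_rev_mid hDR hg hd (by omega) (by omega) rfl
        have hyz : (G).dist y z = g := dist_rev_g hDR hg hd hzy
        have htri := dist_triangle hDR.sc y x z
        omega
    have : Nat.card {z : X // S.R 1 x z ∧ S.R g z y} = 0 := by
      rw [Nat.card_eq_zero]
      exact Or.inl ⟨fun z => (hempty z.1 z.2).elim⟩
    rw [this]
    norm_num

lemma matAgT (hDR : IsDRDGraph G g S) (hg : (G).girth = g) (hd : (G).diam = g) :
    (AssocScheme.adjMat (S.R g))ᵀ = AssocScheme.adjMat (S.R g) := by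
  ext x y
  rw [Matrix.transpose_apply, adjMat_apply, adjMat_apply]
  have : S.R g y x ↔ S.R g x y := by
    rw [hDR.rel, hDR.rel]
    exact ⟨fun h => ⟨le_rfl, dist_rev_g hDR hg hd h.2⟩,
      fun h => ⟨le_rfl, dist_rev_g hDR hg hd h.2⟩⟩
  simp [this]

lemma matAT (hDR : IsDRDGraph G g S) (hg : (G).girth = g) (hd : (G).diam = g) :
    (AssocScheme.adjMat (S.R 1))ᵀ = AssocScheme.adjMat (S.R (g - 1)) := by
  have hg3 := three_le_g hDR hg
  ext x y
  rw [Matrix.transpose_apply, adjMat_apply, adjMat_apply]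
  have : S.R 1 y x ↔ S.R (g - 1) x y := by
    rw [hDR.rel, hDR.rel]
    constructor
    · rintro ⟨-, h⟩
      exact ⟨by omega, dist_rev_mid hDR hg hd (by omega) (by omega) h⟩
    · rintro ⟨-, h⟩
      have := dist_rev_mid hDR hg hd (by omega) (by omega) h
      refine ⟨by omega, by omega⟩
  simp [this]

lemma commAAg (hDR : IsDRDGraph G g S) :
    AssocScheme.adjMat (S.R 1) * AssocScheme.adjMat (S.R g)
      = AssocScheme.adjMat (S.R g) * AssocScheme.adjMat (S.R 1) := by
  obtain ⟨v, hdeg, hv⟩ := hDR.ppoly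
  rw [hv g le_rfl]
  have h := congrArg (Polynomial.aeval (AssocScheme.adjMat (S.R 1)))
    (mul_comm (Polynomial.X : Polynomial ℂ) (v g))
  rw [_root_.map_mul, _root_.map_mul, Polynomial.aeval_X] at h
  exact h

lemma sb_zero (hDR : IsDRDGraph G g S) (hg : (G).girth = g) (hd : (G).diam = g) :
    S.p 1 1 g * S.p g 1 g = 0 := by
  have hg3 := three_le_g hDR hg
  set A := AssocScheme.adjMat (S.R 1) with hA
  set Ag := AssocScheme.adjMat (S.R g) with hAg
  set s := S.p 1 1 g with hs
  set b := S.p g 1 g with hb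
  have E1 : A * Ag = (s : ℂ) • A + (b : ℂ) • Ag := matE1 hDR hg hd
  have E2 : Ag * Aᵀ = (s : ℂ) • Aᵀ + (b : ℂ) • Ag := by
    have := congrArg Matrix.transpose E1
    rw [Matrix.transpose_mul, Matrix.transpose_add, Matrix.transpose_smul,
      Matrix.transpose_smul, matAgT hDR hg hd] at this
    exact this
  have exp1 : A * (Ag * Aᵀ)
      = (s:ℂ)•(A*Aᵀ) + ((b:ℂ)•((s:ℂ)•A) + (b:ℂ)•((b:ℂ)•Ag)) := by
    rw [E2, Matrix.mul_add, Matrix.mul_smul, Matrix.mul_smul, E1, smul_add]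
  have exp2 : (A * Ag) * Aᵀ
      = (s:ℂ)•(A*Aᵀ) + ((b:ℂ)•((s:ℂ)•Aᵀ) + (b:ℂ)•((b:ℂ)•Ag)) := by
    rw [E1, Matrix.add_mul, Matrix.smul_mul, Matrix.smul_mul, E2, smul_add]
  have h3 : (b:ℂ)•((s:ℂ)•A) = (b:ℂ)•((s:ℂ)•Aᵀ) := by
    have heq := exp1.symm.trans ((mul_assoc A Ag Aᵀ).symm.trans exp2)
    exact add_right_cancel (add_left_cancel heq)
  obtain ⟨x, y, hxy⟩ := realize hDR hg hd (show 1 ≤ g by omega)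
  have hRxy : S.R 1 x y := (hDR.rel 1 x y).2 ⟨by omega, hxy⟩
  have hyx : (G).dist y x = g - 1 := dist_rev_mid hDR hg hd le_rfl (by omega) hxy
  have hnR : ¬ S.R 1 y x := by rw [hDR.rel]; rintro ⟨-, h⟩; omega
  have e := (Matrix.ext_iff.mpr h3) x y
  simp only [Matrix.smul_apply, Matrix.transpose_apply, smul_eq_mul, hA,
    adjMat_apply, if_pos hRxy, if_neg hnR] at e
  have : ((s * b : ℕ) : ℂ) = 0 := by push_cast; linear_combination e
  exact_mod_cast this

lemma b_zero (hDR : IsDRDGraph G g S) (hg : (G).girth = g) (hd : (G).diam = g) :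
    S.p g 1 g = 0 := by
  have hg3 := three_le_g hDR hg
  rcases Nat.mul_eq_zero.1 (sb_zero hDR hg hd) with hs | hb
  swap
  · exact hb
  -- case s = 0 : then A*Ag = b•Ag, row sums force b = k 1, contradiction
  obtain ⟨x, y, hxy⟩ := exists_dist_g hDR hg hd
  have E1 : AssocScheme.adjMat (S.R 1) * AssocScheme.adjMat (S.R g)
      = (S.p g 1 g : ℂ) • AssocScheme.adjMat (S.R g) := by
    have E := matE1 hDR hg hd
    rw [hs] at E
    simpa using E
  have hkg : 1 ≤ S.k g := by
    rw [k_spec hDR le_rfl x]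
    have : Nonempty {z : X // (G).dist x z = g} := ⟨⟨y, hxy⟩⟩
    exact Nat.card_pos
  -- row sums
  have S1 : ∑ w : X, (AssocScheme.adjMat (S.R 1) * AssocScheme.adjMat (S.R g)) x w
      = (S.k 1 : ℂ) * (S.k g : ℂ) := by
    simp only [Matrix.mul_apply]
    rw [Finset.sum_comm]
    have inner : ∀ z : X, ∑ w : X, AssocScheme.adjMat (S.R 1) x z
        * AssocScheme.adjMat (S.R g) z w
        = AssocScheme.adjMat (S.R 1) x z * (S.k g : ℂ) := by
      intro z
      rw [← Finset.mul_sum, adjMat_row_sum, card_dist_i hDR le_rfl z]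
    rw [Finset.sum_congr rfl (fun z _ => inner z), ← Finset.sum_mul,
      adjMat_row_sum, card_dist_i hDR (by omega : 1 ≤ g) x]
  have S2 : ∑ w : X, ((S.p g 1 g : ℂ) • AssocScheme.adjMat (S.R g)) x w
      = (S.p g 1 g : ℂ) * (S.k g : ℂ) := by
    simp only [Matrix.smul_apply, smul_eq_mul]
    rw [← Finset.mul_sum, adjMat_row_sum, card_dist_i hDR le_rfl x]
  have hkgC : (S.k g : ℂ) ≠ 0 := Nat.cast_ne_zero.2 (by omega)
  rw [E1] at S1
  have hbk : (S.p g 1 g : ℂ) = (S.k 1 : ℂ) := mul_right_cancel₀ hkgC (S2.symm.trans S1)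
  have hk1b : S.p g 1 g = S.k 1 := by exact_mod_cast hbk
  -- geodesic gives an out-neighbour of x at distance g-1 from y
  have hw : (G).walk (1 + (g - 1)) x y := by
    rw [(by omega : 1 + (g - 1) = g)]
    have := walk_dist (hDR.sc x y); rwa [hxy] at this
  obtain ⟨t, ht1, ht2⟩ := walk_split hw
  obtain ⟨t', hadj', ht'⟩ := ht1
  have htt : t' = t := ht'
  have hadj : (G).adj x t := htt ▸ hadj'
  have hdxt : (G).dist x t = 1 := dist_eq_one_of_adj hDR.simple hadj
  have hty : (G).dist t y = g - 1 := by
    have l1 : (G).dist t y ≤ g - 1 := dist_le_of_walk ht2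
    have l2 := dist_triangle hDR.sc x t y
    omega
  have hRxy : S.R g x y := (hDR.rel g x y).2 ⟨le_rfl, hxy⟩
  have hcard : S.p g 1 g = Nat.card {z : X // S.R 1 x z ∧ S.R g z y} :=
    S.p_spec g 1 g x y hRxy
  have hcard2 : S.k 1 = Nat.card {z : X // S.R 1 x z} := (card_dist_i hDR (by omega) x).symm
  have hinj : Fintype.card {z : X // S.R 1 x z ∧ S.R g z y} < Fintype.card {z : X // S.R 1 x z} := by
    apply Fintype.card_lt_of_injective_of_notMem
      (fun z => (⟨z.1, z.2.1⟩ : {z : X // S.R 1 x z}))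
    · intro a b hab
      have h2 := congrArg Subtype.val hab
      simp only at h2
      exact Subtype.ext h2
    · show (⟨t, (hDR.rel 1 x t).2 ⟨by omega, hdxt⟩⟩ : {z : X // S.R 1 x z}) ∉ _
      rintro ⟨⟨z, hz1, hz2⟩, hzeq⟩
      have : z = t := congrArg Subtype.val hzeq
      subst this
      have := ((hDR.rel g z y).1 hz2).2
      omega
  rw [Nat.card_eq_fintype_card] at hcard hcard2
  omega

lemma main_out (hDR : IsDRDGraph G g S) (hg : (G).girth = g) (hd : (G).diam = g)
    {x y w : X} (hxy : (G).dist x y = g) (hadj : (G).adj x w) :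
    (G).dist w y = g - 1 := by
  have hg3 := three_le_g hDR hg
  have hdxw : (G).dist x w = 1 := dist_eq_one_of_adj hDR.simple hadj
  have htri := dist_triangle hDR.sc x w y
  have hle : (G).dist w y ≤ g := dist_le_g hDR w y
  by_contra hne
  have hwy : (G).dist w y = g := by omega
  have hRxy : S.R g x y := (hDR.rel g x y).2 ⟨le_rfl, hxy⟩
  have hcard : S.p g 1 g = Nat.card {z : X // S.R 1 x z ∧ S.R g z y} :=
    S.p_spec g 1 g x y hRxy
  rw [b_zero hDR hg hd] at hcard
  have : Nonempty {z : X // S.R 1 x z ∧ S.R g z y} :=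
    ⟨⟨w, (hDR.rel 1 x w).2 ⟨by omega, hdxw⟩, (hDR.rel g w y).2 ⟨le_rfl, hwy⟩⟩⟩
  have := Nat.card_pos (α := {z : X // S.R 1 x z ∧ S.R g z y})
  omega

lemma main_in (hDR : IsDRDGraph G g S) (hg : (G).girth = g) (hd : (G).diam = g)
    {x y z : X} (hxy : (G).dist x y = g) (hadj : (G).adj z y) :
    (G).dist x z = g - 1 := by
  have hg3 := three_le_g hDR hg
  have hdzy : (G).dist z y = 1 := dist_eq_one_of_adj hDR.simple hadj
  have htri := dist_triangle hDR.sc x z y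
  have hle : (G).dist x z ≤ g := dist_le_g hDR x z
  by_contra hne
  have hxz : (G).dist x z = g := by omega
  -- entry of Ag * A at (x,y) is zero
  have E : (AssocScheme.adjMat (S.R g) * AssocScheme.adjMat (S.R 1)) x y = 0 := by
    rw [← commAAg hDR, matE1 hDR hg hd, b_zero hDR hg hd]
    have hnR : ¬ S.R 1 x y := by rw [hDR.rel]; rintro ⟨-, h⟩; omega
    simp [Matrix.add_apply, Matrix.smul_apply, adjMat_apply, if_neg hnR]
  rw [adjMat_mul_apply] at E
  have hcard : Nat.card {w : X // S.R g x w ∧ S.R 1 w y} = 0 := by exact_mod_cast E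
  have : Nonempty {w : X // S.R g x w ∧ S.R 1 w y} :=
    ⟨⟨z, (hDR.rel g x z).2 ⟨le_rfl, hxz⟩, (hDR.rel 1 z y).2 ⟨by omega, hdzy⟩⟩⟩
  have := Nat.card_pos (α := {w : X // S.R g x w ∧ S.R 1 w y})
  omega


/-- Bundle of hypotheses. -/
structure Ctx (S : AssocScheme X g) : Prop where
  hDR : IsDRDGraph (DGraph.mk (S.R 1)) g S
  hg : (DGraph.mk (S.R 1)).girth = g
  hd : (DGraph.mk (S.R 1)).diam = g

/-- being equal or at two-way distance (g,g). -/
def rel' (S : AssocScheme X g) (x y : X) : Prop :=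
  (DGraph.mk (S.R 1)).dist x y = g ∨ x = y

lemma rel'_refl (x : X) : rel' S x x := Or.inr rfl

lemma rel'_symm (C : Ctx S) {x y : X} (h : rel' S x y) : rel' S y x := by
  rcases h with h | h
  · exact Or.inl (dist_rev_g C.hDR C.hg C.hd h)
  · exact Or.inr h.symm

lemma nbr_out (C : Ctx S) {x x' w : X} (h : rel' S x x') (hadj : (G).adj x w) :
    (G).adj x' w := by
  have hg3 := three_le_g C.hDR C.hg
  rcases h with h | h
  · have h1 : (G).dist w x' = g - 1 := main_out C.hDR C.hg C.hd h hadj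
    have h2 : (G).dist x' w = 1 := by
      have := sigma_dist C.hDR w x'
      rwa [h1, sigma_g1 C.hDR C.hg C.hd] at this
    exact adj_of_dist_eq_one (C.hDR.sc x' w) h2
  · exact h ▸ hadj

lemma nbr_in (C : Ctx S) {y y' w : X} (h : rel' S y y') (hadj : (G).adj w y) :
    (G).adj w y' := by
  have hg3 := three_le_g C.hDR C.hg
  rcases h with h | h
  · have hsym : (G).dist y' y = g := dist_rev_g C.hDR C.hg C.hd h
    have h1 : (G).dist y' w = g - 1 := main_in C.hDR C.hg C.hd hsym hadj
    have h2 : (G).dist w y' = 1 := by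
      have := sigma_dist C.hDR y' w
      rwa [h1, sigma_g1 C.hDR C.hg C.hd] at this
    exact adj_of_dist_eq_one (C.hDR.sc w y') h2
  · exact h ▸ hadj

lemma rel'_trans (C : Ctx S) {x y z : X} (h1 : rel' S x y) (h2 : rel' S y z) :
    rel' S x z := by
  have hg3 := three_le_g C.hDR C.hg
  rcases h1 with h1 | h1
  swap
  · exact h1 ▸ h2
  rcases h2 with h2 | h2
  swap
  · exact h2 ▸ Or.inl h1
  by_cases hxz : x = z
  · exact Or.inr hxz
  left
  have hle : (G).dist x z ≤ g := dist_le_g C.hDR x z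
  have hne : (G).dist x z ≠ 0 := dist_ne_zero C.hDR hxz
  by_contra hcon
  -- 1 ≤ dist x z ≤ g - 1 : take the first step of a geodesic
  have hwalk : (G).walk (1 + ((G).dist x z - 1)) x z := by
    rw [(by omega : 1 + ((G).dist x z - 1) = (G).dist x z)]
    exact walk_dist (C.hDR.sc x z)
  obtain ⟨t1, ht1, ht2⟩ := walk_split hwalk
  obtain ⟨t, hadj, htw⟩ := ht1
  have htt : t = t1 := htw
  have hadjxt : (G).adj x t1 := htt ▸ hadj
  have hdtz : (G).dist t1 z ≤ (G).dist x z - 1 := dist_le_of_walk ht2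
  have hadjyt : (G).adj y t1 := nbr_out C (Or.inl h1) hadjxt
  have hadjzt : (G).adj z t1 := nbr_out C (Or.inl h2) hadjyt
  have : (G).dist t1 z = g - 1 := adj_rev C.hDR C.hg C.hd hadjzt
  omega

/-- The setoid whose classes are the fibers. -/
def fsetoid (S : AssocScheme X g) (C : Ctx S) : Setoid X :=
  ⟨rel' S, ⟨rel'_refl, rel'_symm C, rel'_trans C⟩⟩

variable (C : Ctx S)

/-- Quotient by fibers. -/
def QuotX (C : Ctx S) : Type := Quotient (fsetoid S C)

noncomputable instance : Fintype (QuotX C) :=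
  @Quotient.fintype X _ (fsetoid S C) (fun _ _ => Classical.propDecidable _)

/-- Quotient digraph. -/
def Dgr (C : Ctx S) : DGraph (QuotX C) :=
  ⟨Quotient.lift₂ (fun x y => (DGraph.mk (S.R 1)).adj x y)
    (fun a b a' b' ha hb => propext
      ⟨fun h => nbr_in C hb (nbr_out C ha h),
       fun h => nbr_in C (rel'_symm C hb) (nbr_out C (rel'_symm C ha) h)⟩)⟩

lemma Dadj (x y : X) :
    (Dgr C).adj (Quotient.mk (fsetoid S C) x) (Quotient.mk (fsetoid S C) y)
      ↔ (G).adj x y := Iff.rfl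

lemma quot_eq_iff (x y : X) :
    (Quotient.mk (fsetoid S C) x = Quotient.mk (fsetoid S C) y) ↔ rel' S x y :=
  ⟨Quotient.exact, fun h => Quotient.sound h⟩


/-- class map -/
def qmk (C : Ctx S) : X → QuotX C := Quotient.mk (fsetoid S C)

lemma qmk_surj (q : QuotX C) : ∃ x : X, qmk C x = q := by
  obtain ⟨x, hx⟩ := Quotient.exists_rep q
  exact ⟨x, hx⟩

lemma Dadj' (x y : X) : (Dgr C).adj (qmk C x) (qmk C y) ↔ (G).adj x y := Iff.rfl

lemma qmk_eq_iff (x y : X) : (qmk C x = qmk C y) ↔ rel' S x y :=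
  ⟨Quotient.exact, fun h => Quotient.sound h⟩

lemma wproj : ∀ {m : ℕ} {x y : X}, (G).walk m x y →
    (Dgr C).walk m (qmk C x) (qmk C y) := by
  intro m
  induction m with
  | zero => intro x y h; exact congrArg (qmk C) h
  | succ m ih =>
    rintro x y ⟨z, hz, hw⟩
    exact ⟨qmk C z, (Dadj' C x z).2 hz, ih hw⟩

lemma wlift : ∀ {m : ℕ} {x : X} {q : QuotX C}, (Dgr C).walk m (qmk C x) q →
    ∃ y : X, qmk C y = q ∧ (G).walk m x y := by
  intro m
  induction m with
  | zero => intro x q h; exact ⟨x, h, rfl⟩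
  | succ m ih =>
    rintro x q ⟨Q, hQ, hw⟩
    obtain ⟨w, rfl⟩ := qmk_surj C Q
    obtain ⟨y, hy, hwy⟩ := ih hw
    exact ⟨y, hy, w, (Dadj' C x w).1 hQ, hwy⟩

lemma sc' : (Dgr C).StronglyConnected := by
  intro q q'
  obtain ⟨x, rfl⟩ := qmk_surj C q
  obtain ⟨y, rfl⟩ := qmk_surj C q'
  obtain ⟨n, hn⟩ := C.hDR.sc x y
  exact ⟨n, wproj C hn⟩

lemma simple' : (Dgr C).Simple := by
  intro q
  obtain ⟨x, rfl⟩ := qmk_surj C q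
  exact fun h => C.hDR.simple x ((Dadj' C x x).1 h)

include C in
lemma dist_invar {x y y' : X} (hyy' : rel' S y y') (hnot : ¬ rel' S x y) :
    (G).dist x y = (G).dist x y' := by
  have hnot' : ¬ rel' S x y' := by
    intro h
    exact hnot (rel'_trans C h (rel'_symm C hyy'))
  have key : ∀ z z' w : X, rel' S z z' → ¬ rel' S w z →
      (G).dist w z' ≤ (G).dist w z := by
    intro z z' w hzz hwz
    have hne : (G).dist w z ≠ 0 := by
      intro h0
      exact hwz ((eq_of_dist_eq_zero (C.hDR.sc w z) h0) ▸ Or.inr rfl)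
    have hw : (G).walk (((G).dist w z - 1) + 1) w z := by
      rw [(by omega : ((G).dist w z - 1) + 1 = (G).dist w z)]
      exact walk_dist (C.hDR.sc w z)
    obtain ⟨u, hu1, hu2⟩ := walk_split hw
    obtain ⟨z0, hadj, hz0⟩ := hu2
    have : z0 = z := hz0
    have hadj' : (G).adj u z := this ▸ hadj
    have hadj'' : (G).adj u z' := nbr_in C hzz hadj'
    have : (G).walk (((G).dist w z - 1) + 1) w z' :=
      walk_trans hu1 ⟨z', hadj'', rfl⟩
    have := dist_le_of_walk this
    omega
  exact Nat.le_antisymm (key y' y x (rel'_symm C hyy') hnot')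
    (key y y' x hyy' hnot)

lemma qdist (x y : X) : (Dgr C).dist (qmk C x) (qmk C y)
    = if (G).dist x y = g then 0 else (G).dist x y := by
  have hg3 := three_le_g C.hDR C.hg
  by_cases hrel : rel' S x y
  · have hq : qmk C x = qmk C y := (qmk_eq_iff C x y).2 hrel
    rw [hq, DGraph.dist_self]
    rcases hrel with h | h
    · rw [if_pos h]
    · subst h; rw [if_neg (by rw [DGraph.dist_self]; omega), DGraph.dist_self]
  · have hne0 : (G).dist x y ≠ 0 :=
      fun h0 => hrel (Or.inr (eq_of_dist_eq_zero (C.hDR.sc x y) h0))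
    have hneg : (G).dist x y ≠ g := fun hG => hrel (Or.inl hG)
    rw [if_neg hneg]
    apply Nat.le_antisymm
    · exact dist_le_of_walk (wproj C (walk_dist (C.hDR.sc x y)))
    · have hw := walk_dist (sc' C (qmk C x) (qmk C y))
      obtain ⟨y', hy', hwy'⟩ := wlift C hw
      have hyy' : rel' S y y' := rel'_symm C ((qmk_eq_iff C y' y).1 hy')
      have := dist_invar C hyy' hrel
      rw [this]
      exact dist_le_of_walk hwy'

lemma qdist_le (q q' : QuotX C) : (Dgr C).dist q q' ≤ g - 1 := by
  have hg3 := three_le_g C.hDR C.hg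
  obtain ⟨x, rfl⟩ := qmk_surj C q
  obtain ⟨y, rfl⟩ := qmk_surj C q'
  rw [qdist C]
  have := dist_le_g C.hDR x y
  split <;> omega

lemma diam' : (Dgr C).diam = g - 1 := by
  have hg3 := three_le_g C.hDR C.hg
  have hbdd : BddAbove {n | ∃ q q' : QuotX C, (Dgr C).dist q q' = n} := by
    refine ⟨g - 1, fun n hn => ?_⟩
    obtain ⟨q, q', h⟩ := hn
    exact h ▸ qdist_le C q q'
  have hmem : g - 1 ∈ {n | ∃ q q' : QuotX C, (Dgr C).dist q q' = n} := by
    obtain ⟨x, y, hxy⟩ := realize C.hDR C.hg C.hd (show g - 1 ≤ g by omega)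
    refine ⟨qmk C x, qmk C y, ?_⟩
    rw [qdist C, hxy, if_neg (by omega)]
  apply Nat.le_antisymm
  · have hne : {n | ∃ q q' : QuotX C, (Dgr C).dist q q' = n}.Nonempty := ⟨_, hmem⟩
    obtain ⟨q, q', h⟩ := Nat.sSup_mem hne hbdd
    have := qdist_le C q q'
    rw [h] at this
    exact this
  · exact le_csSup hbdd hmem

lemma class_card (q : QuotX C) :
    (Finset.univ.filter (fun z : X => qmk C z = q)).card = S.k g + 1 := by
  have hg3 := three_le_g C.hDR C.hg
  obtain ⟨x, rfl⟩ := qmk_surj C q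
  have hset : ∀ z : X, (qmk C z = qmk C x) ↔ ((G).dist x z = g ∨ z = x) := by
    intro z
    rw [qmk_eq_iff C z x]
    constructor
    · rintro (h | h)
      · exact Or.inl (dist_rev_g C.hDR C.hg C.hd h)
      · exact Or.inr h
    · rintro (h | h)
      · exact Or.inl (dist_rev_g C.hDR C.hg C.hd h)
      · exact Or.inr h
  have hfc : Finset.univ.filter (fun z : X => qmk C z = qmk C x)
      = Finset.univ.filter (fun z : X => (G).dist x z = g ∨ z = x) :=
    Finset.filter_congr (fun z _ => by rw [hset z])
  rw [hfc, Finset.filter_or, Finset.card_union_of_disjoint]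
  · have h1 : (Finset.univ.filter (fun z : X => (G).dist x z = g)).card = S.k g := by
      rw [k_spec C.hDR le_rfl x, natCard_eq_filter]
      congr!
    have h2 : (Finset.univ.filter (fun z : X => z = x)).card = 1 := by
      have : Finset.univ.filter (fun z : X => z = x) = {x} := by
        ext z; simp
      rw [this, Finset.card_singleton]
    omega
  · rw [Finset.disjoint_filter]
    intro z _ hz hzx
    rw [hzx, DGraph.dist_self] at hz
    omega

lemma card_classpred (P : QuotX C → Prop) :
    (Finset.univ.filter (fun z : X => P (qmk C z))).card
      = (S.k g + 1) * (Finset.univ.filter P).card := by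
  rw [Finset.card_eq_sum_card_fiberwise
    (f := qmk C) (t := Finset.univ.filter P)
    (fun z hz => by
      simp only [Finset.mem_coe, Finset.mem_filter] at hz ⊢
      exact ⟨Finset.mem_univ _, hz.2⟩)]
  have : ∀ q ∈ Finset.univ.filter P,
      ((Finset.univ.filter (fun z : X => P (qmk C z))).filter
        (fun z => qmk C z = q)).card = S.k g + 1 := by
    intro q hq
    simp only [Finset.mem_filter] at hq
    rw [Finset.filter_filter]
    have hfc : Finset.univ.filter (fun z : X => P (qmk C z) ∧ qmk C z = q)
        = Finset.univ.filter (fun z : X => qmk C z = q) :=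
      Finset.filter_congr (fun z _ =>
        ⟨fun h => h.2, fun h => ⟨h ▸ hq.2, h⟩⟩)
    rw [hfc]
    exact class_card C q
  rw [Finset.sum_congr rfl this, Finset.sum_const, smul_eq_mul, mul_comm]


lemma natCard_filter {α : Type} [Fintype α] (P : α → Prop) :
    Nat.card {z : α // P z} = (Finset.univ.filter P).card := by
  rw [Nat.card_eq_fintype_card, Fintype.card_subtype]

lemma card_filter_fiber {α : Type} [Fintype α] (f : α → ℕ × ℕ) (t : Finset (ℕ × ℕ)) :
    (Finset.univ.filter (fun z : α => f z ∈ t)).card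
      = ∑ ab ∈ t, (Finset.univ.filter (fun z : α => f z = ab)).card := by
  rw [Finset.card_eq_sum_card_fiberwise
    (f := f) (s := Finset.univ.filter (fun z : α => f z ∈ t)) (t := t) (fun z hz => (Finset.mem_filter.1 hz).2)]
  apply Finset.sum_congr rfl
  intro ab hab
  congr 1
  rw [Finset.filter_filter]
  apply Finset.filter_congr
  intro z _
  exact ⟨fun hz => hz.2, fun hz => ⟨hz ▸ hab, hz⟩⟩

/-- lifted index set -/
def Lf (g i : ℕ) : Finset ℕ := if i = 0 then {0, g} else {i}

lemma Lf_le {g i a : ℕ} (hi : i ≤ g - 1) (hg : 3 ≤ g) (ha : a ∈ Lf g i) : a ≤ g := by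
  unfold Lf at ha
  split at ha <;> simp at ha <;> omega

lemma phi_mem {g d i : ℕ} (hd : d ≤ g) (hi : i ≤ g - 1) (hg : 3 ≤ g) :
    ((if d = g then 0 else d) = i) ↔ d ∈ Lf g i := by
  unfold Lf
  by_cases h0 : i = 0
  · subst h0
    rw [if_pos rfl]
    simp only [Finset.mem_insert, Finset.mem_singleton]
    by_cases hdg : d = g
    · rw [if_pos hdg]
      simp [hdg]
    · rw [if_neg hdg]
      constructor
      · exact fun h => Or.inl h
      · rintro (h | h)
        · exact h
        · exact absurd h hdg
  · rw [if_neg h0, Finset.mem_singleton]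
    by_cases hdg : d = g
    · rw [if_pos hdg]
      constructor <;> intro h <;> omega
    · rw [if_neg hdg]

/-- relations of the quotient scheme -/
def QR (C : Ctx S) (i : ℕ) (q q' : QuotX C) : Prop :=
  i ≤ g - 1 ∧ (Dgr C).dist q q' = i

lemma qdist_zero_iff (q q' : QuotX C) : (Dgr C).dist q q' = 0 ↔ q = q' := by
  constructor
  · exact fun h => eq_of_dist_eq_zero (sc' C q q') h
  · rintro rfl; exact DGraph.dist_self q

lemma qdist_rev (q q' : QuotX C) : (Dgr C).dist q' q
    = if (Dgr C).dist q q' = 0 then 0 else g - (Dgr C).dist q q' := by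
  have hg3 := three_le_g C.hDR C.hg
  obtain ⟨x, rfl⟩ := qmk_surj C q
  obtain ⟨y, rfl⟩ := qmk_surj C q'
  rw [qdist C, qdist C]
  have hle : (G).dist x y ≤ g := dist_le_g C.hDR x y
  by_cases h0 : (G).dist x y = 0
  · have hxy := eq_of_dist_eq_zero (C.hDR.sc x y) h0
    subst hxy
    rw [DGraph.dist_self]
    simp [h0]
  by_cases hG : (G).dist x y = g
  · rw [dist_rev_g C.hDR C.hg C.hd hG, hG]
    simp
  · rw [dist_rev_mid C.hDR C.hg C.hd (by omega) (by omega) rfl]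
    rw [if_neg hG, if_neg (by omega), if_neg h0]

lemma exists_reps {h : ℕ} {q q' : QuotX C} (hh : (Dgr C).dist q q' = h) :
    ∃ x y : X, qmk C x = q ∧ qmk C y = q' ∧ (G).dist x y = h := by
  have hg3 := three_le_g C.hDR C.hg
  by_cases h0 : h = 0
  · subst h0
    have : q = q' := (qdist_zero_iff C q q').1 hh
    subst this
    obtain ⟨x, rfl⟩ := qmk_surj C q
    exact ⟨x, x, rfl, rfl, DGraph.dist_self x⟩
  · obtain ⟨x, rfl⟩ := qmk_surj C q
    obtain ⟨y, rfl⟩ := qmk_surj C q'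
    refine ⟨x, y, rfl, rfl, ?_⟩
    have := qdist C x y
    rw [hh] at this
    by_cases hG : (G).dist x y = g
    · rw [if_pos hG] at this; omega
    · rw [if_neg hG] at this; omega

lemma natCard_pair_fiber {α : Type} [Fintype α] (f1 f2 : α → ℕ) (t u : Finset ℕ) :
    Nat.card {z : α // f1 z ∈ t ∧ f2 z ∈ u}
      = ∑ a ∈ t, ∑ b ∈ u, Nat.card {z : α // f1 z = a ∧ f2 z = b} := by
  have e : {z : α // f1 z ∈ t ∧ f2 z ∈ u}
      ≃ Σ ab : {ab : ℕ × ℕ // ab ∈ t ×ˢ u}, {z : α // (f1 z, f2 z) = ab.1} :=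
    { toFun := fun z => ⟨⟨(f1 z.1, f2 z.1), Finset.mem_product.2 ⟨z.2.1, z.2.2⟩⟩, ⟨z.1, rfl⟩⟩
      invFun := fun s => ⟨s.2.1, by
        have h1 : f1 s.2.1 = s.1.1.1 := congrArg Prod.fst s.2.2
        have h2 : f2 s.2.1 = s.1.1.2 := congrArg Prod.snd s.2.2
        have hm := Finset.mem_product.1 s.1.2
        exact ⟨h1 ▸ hm.1, h2 ▸ hm.2⟩⟩
      left_inv := fun z => rfl
      right_inv := fun s => by
        rcases s with ⟨⟨ab, hab⟩, ⟨z, hz⟩⟩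
        have hz' : (f1 z, f2 z) = ab := hz
        subst hz'
        rfl }
  rw [Nat.card_congr e, Nat.card_eq_fintype_card, Fintype.card_sigma]
  rw [Finset.sum_coe_sort (t ×ˢ u)
    (fun p => Fintype.card {z : α // (f1 z, f2 z) = p})]
  rw [Finset.sum_product]
  apply Finset.sum_congr rfl
  intro a _
  apply Finset.sum_congr rfl
  intro b _
  rw [← Nat.card_eq_fintype_card]
  exact Nat.card_congr (Equiv.subtypeEquivRight (fun z => by rw [Prod.mk.injEq]))

lemma fiber_card (q : QuotX C) : Nat.card {z : X // qmk C z = q} = S.k g + 1 := by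
  rw [natCard_filter]
  convert class_card C q using 2

lemma card_classpred' (P : QuotX C → Prop) :
    Nat.card {z : X // P (qmk C z)} = (S.k g + 1) * Nat.card {q : QuotX C // P q} := by
  have e : {z : X // P (qmk C z)}
      ≃ Σ q : {q : QuotX C // P q}, {z : X // qmk C z = q.1} :=
    { toFun := fun z => ⟨⟨qmk C z.1, z.2⟩, ⟨z.1, rfl⟩⟩
      invFun := fun s => ⟨s.2.1, by
        have h := s.2.2
        rw [h]
        exact s.1.2⟩
      left_inv := fun z => rfl
      right_inv := fun s => by
        rcases s with ⟨⟨q, hq⟩, ⟨z, hz⟩⟩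
        have hz' : qmk C z = q := hz
        subst hz'
        rfl }
  rw [Nat.card_congr e, Nat.card_eq_fintype_card, Fintype.card_sigma]
  have : ∀ q : {q : QuotX C // P q},
      Fintype.card {z : X // qmk C z = q.1} = S.k g + 1 := by
    intro q
    rw [← Nat.card_eq_fintype_card]
    exact fiber_card C q.1
  rw [Finset.sum_congr rfl (fun q _ => this q), Finset.sum_const, smul_eq_mul]
  rw [mul_comm, Nat.card_eq_fintype_card, Fintype.card]

lemma qp_core {h i j : ℕ} (hi : i ≤ g - 1) (hj : j ≤ g - 1) {q q' : QuotX C}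
    (hh : (Dgr C).dist q q' = h) :
    (S.k g + 1) * Nat.card {qz : QuotX C // QR C i q qz ∧ QR C j qz q'}
      = ∑ a ∈ Lf g i, ∑ b ∈ Lf g j, S.p h a b := by
  have hg3 := three_le_g C.hDR C.hg
  have hhle : h ≤ g - 1 := by rw [← hh]; exact qdist_le C q q'
  obtain ⟨x, y, hx, hy, hdxy⟩ := exists_reps C hh
  rw [← card_classpred' C (fun qz => QR C i q qz ∧ QR C j qz q')]
  have hpred : ∀ z : X, (QR C i q (qmk C z) ∧ QR C j (qmk C z) q')
      ↔ ((G).dist x z ∈ Lf g i ∧ (G).dist z y ∈ Lf g j) := by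
    intro z
    have e1 : (Dgr C).dist q (qmk C z) = if (G).dist x z = g then 0 else (G).dist x z := by
      rw [← hx, qdist C]
    have e2 : (Dgr C).dist (qmk C z) q' = if (G).dist z y = g then 0 else (G).dist z y := by
      rw [← hy, qdist C]
    unfold QR
    rw [e1, e2]
    constructor
    · rintro ⟨⟨-, h1⟩, ⟨-, h2⟩⟩
      exact ⟨(phi_mem (dist_le_g C.hDR x z) hi hg3).1 h1,
             (phi_mem (dist_le_g C.hDR z y) hj hg3).1 h2⟩
    · rintro ⟨h1, h2⟩
      exact ⟨⟨hi, (phi_mem (dist_le_g C.hDR x z) hi hg3).2 h1⟩,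
             ⟨hj, (phi_mem (dist_le_g C.hDR z y) hj hg3).2 h2⟩⟩
  rw [Nat.card_congr (Equiv.subtypeEquivRight hpred)]
  rw [natCard_pair_fiber ((G).dist x) (fun z => (G).dist z y) (Lf g i) (Lf g j)]
  apply Finset.sum_congr rfl
  intro a ha
  apply Finset.sum_congr rfl
  intro b hb
  have hR : S.R h x y := (C.hDR.rel h x y).2 ⟨by omega, hdxy⟩
  rw [S.p_spec h a b x y hR]
  apply Nat.card_congr
  apply Equiv.subtypeEquivRight
  intro z
  constructor
  · rintro ⟨h1, h2⟩
    exact ⟨(C.hDR.rel a x z).2 ⟨Lf_le hi hg3 ha, h1⟩,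
           (C.hDR.rel b z y).2 ⟨Lf_le hj hg3 hb, h2⟩⟩
  · rintro ⟨hza, hzb⟩
    exact ⟨((C.hDR.rel a x z).1 hza).2, ((C.hDR.rel b z y).1 hzb).2⟩

/-- the quotient association scheme -/
noncomputable def QS (C : Ctx S) : AssocScheme (QuotX C) (g - 1) where
  R := QR C
  R_diag := fun q q' => by
    have hg3 := three_le_g C.hDR C.hg
    unfold QR
    rw [qdist_zero_iff C q q']
    exact ⟨fun h => h.2, fun h => ⟨by omega, h⟩⟩
  R_partition := fun q q' => by
    refine ⟨(Dgr C).dist q q', ⟨⟨qdist_le C q q', ⟨qdist_le C q q', rfl⟩⟩, ?_⟩⟩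
    rintro i ⟨-, -, hi⟩
    exact hi.symm
  R_empty := fun i hi q q' h => absurd h.1 (by omega)
  star := fun i => if i = 0 then 0 else if i ≤ g - 1 then g - i else i
  star_le := fun i hi => by
    have hg3 := three_le_g C.hDR C.hg
    by_cases h0 : i = 0
    · simp [h0]
    · simp only [if_neg h0, if_pos hi]; omega
  R_star := fun i q q' => by
    have hg3 := three_le_g C.hDR C.hg
    unfold QR
    have hrev := qdist_rev C q' q
    by_cases h0 : i = 0
    · subst h0
      show (0 ≤ g - 1 ∧ (Dgr C).dist q q' = 0) ↔ (0 ≤ g - 1 ∧ (Dgr C).dist q' q = 0)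
      have hq := qdist_zero_iff C q q'
      have hq' := qdist_zero_iff C q' q
      exact ⟨fun h => ⟨h.1, hq'.2 (hq.1 h.2).symm⟩,
             fun h => ⟨h.1, hq.2 (hq'.1 h.2).symm⟩⟩
    · simp only [if_neg h0]
      by_cases hig : i ≤ g - 1
      · simp only [if_pos hig]
        have hle1 := qdist_le C q' q
        have hle2 := qdist_le C q q'
        constructor
        · rintro ⟨-, hd⟩
          refine ⟨hig, ?_⟩
          rw [hd] at hrev
          split at hrev <;> omega
        · rintro ⟨-, hd⟩
          rw [hd, if_neg (by omega)] at hrev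
          exact ⟨by omega, by omega⟩
      · simp only [if_neg hig]
        exact ⟨fun h => absurd h.1 hig, fun h => absurd h.1 hig⟩
  p := fun h i j => if i ≤ g - 1 ∧ j ≤ g - 1 then
      (∑ a ∈ Lf g i, ∑ b ∈ Lf g j, S.p h a b) / (S.k g + 1) else 0
  p_spec := fun h i j q q' hR => by
    have hg3 := three_le_g C.hDR C.hg
    by_cases hij : i ≤ g - 1 ∧ j ≤ g - 1
    · simp only [if_pos hij]
      have hcore := qp_core C hij.1 hij.2 hR.2
      rw [← hcore, Nat.mul_div_cancel_left _ (by omega)]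
    · simp only [if_neg hij]
      symm
      rw [Nat.card_eq_zero]
      left
      refine ⟨fun z => ?_⟩
      obtain ⟨⟨h1, -⟩, ⟨h2, -⟩⟩ := z.2
      exact hij ⟨h1, h2⟩


lemma qdist_one_iff (x z : X) :
    (Dgr C).dist (qmk C x) (qmk C z) = 1 ↔ (G).adj x z := by
  have hg3 := three_le_g C.hDR C.hg
  rw [qdist C]
  constructor
  · intro h
    split at h
    · omega
    · exact adj_of_dist_eq_one (C.hDR.sc x z) h
  · intro h
    have := dist_eq_one_of_adj C.hDR.simple h
    rw [this, if_neg (by omega)]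

lemma adjq (x z : X) :
    AssocScheme.adjMat (S.R 1) x z
      = AssocScheme.adjMat ((QS C).R 1) (qmk C x) (qmk C z) := by
  have hg3 := three_le_g C.hDR C.hg
  rw [adjMat_apply, adjMat_apply]
  apply if_congr _ rfl rfl
  rw [C.hDR.rel]
  show (1 ≤ g ∧ (G).dist x z = 1) ↔ QR C 1 (qmk C x) (qmk C z)
  unfold QR
  rw [qdist_one_iff C x z]
  constructor
  · rintro ⟨-, h⟩
    exact ⟨by omega, adj_of_dist_eq_one (C.hDR.sc x z) h⟩
  · rintro ⟨-, h⟩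
    exact ⟨by omega, dist_eq_one_of_adj C.hDR.simple h⟩

lemma sum_fiber_c (F : QuotX C → ℂ) :
    ∑ z : X, F (qmk C z) = ((S.k g + 1 : ℕ) : ℂ) * ∑ q : QuotX C, F q := by
  rw [Finset.sum_comp]
  have himg : Finset.univ.image (qmk C) = Finset.univ :=
    Finset.image_univ_of_surjective (fun q => qmk_surj C q)
  rw [himg, Finset.mul_sum]
  apply Finset.sum_congr rfl
  intro q _
  have hc : (Finset.univ.filter (fun a : X => qmk C a = q)).card = S.k g + 1 := by
    convert class_card C q using 2
  rw [hc]
  simp [mul_comm]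

lemma Apow : ∀ m : ℕ, 1 ≤ m → ∀ x y : X,
    (AssocScheme.adjMat (S.R 1) ^ m) x y
      = ((S.k g + 1 : ℕ) : ℂ)^(m-1)
        * ((AssocScheme.adjMat ((QS C).R 1) ^ m) (qmk C x) (qmk C y)) := by
  intro m
  induction m with
  | zero => omega
  | succ m ih =>
    intro hm x y
    by_cases hm1 : m = 0
    · subst hm1
      rw [pow_one, pow_one, adjq C]
      norm_num
    · have hm' : 1 ≤ m := by omega
      rw [pow_succ', pow_succ']
      rw [Matrix.mul_apply, Matrix.mul_apply]
      have hterm : ∀ z : X, AssocScheme.adjMat (S.R 1) x z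
          * (AssocScheme.adjMat (S.R 1) ^ m) z y
          = ((S.k g + 1 : ℕ) : ℂ)^(m-1) *
            (AssocScheme.adjMat ((QS C).R 1) (qmk C x) (qmk C z)
              * (AssocScheme.adjMat ((QS C).R 1) ^ m) (qmk C z) (qmk C y)) := by
        intro z
        rw [ih hm' z y, adjq C x z]
        ring
      rw [Finset.sum_congr rfl (fun z _ => hterm z), ← Finset.mul_sum]
      rw [sum_fiber_c C (fun q => AssocScheme.adjMat ((QS C).R 1) (qmk C x) q
        * (AssocScheme.adjMat ((QS C).R 1) ^ m) q (qmk C y))]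
      rw [← mul_assoc]
      congr 1
      rw [(show m + 1 - 1 = (m - 1) + 1 by omega), pow_succ]

/-- quotient polynomials -/
noncomputable def qv (n : ℕ) (P : Polynomial ℂ) : Polynomial ℂ :=
  Polynomial.C (P.coeff 0) + ∑ m ∈ Finset.range P.natDegree,
    Polynomial.C (P.coeff (m+1) * (n:ℂ)^m) * Polynomial.X^(m+1)

lemma qv_coeff_nd (n : ℕ) (P : Polynomial ℂ) (h1 : 1 ≤ P.natDegree) :
    (qv n P).coeff P.natDegree = P.coeff P.natDegree * (n:ℂ)^(P.natDegree - 1) := by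
  unfold qv
  rw [Polynomial.coeff_add, Polynomial.coeff_C, if_neg (by omega),
    Polynomial.finset_sum_coeff]
  rw [Finset.sum_eq_single (P.natDegree - 1)]
  · rw [Polynomial.coeff_C_mul, Polynomial.coeff_X_pow,
      if_pos (by omega : P.natDegree = P.natDegree - 1 + 1)]
    ring_nf
    rw [(by omega : 1 + (P.natDegree - 1) = P.natDegree)]
    ring
  · intro m hm hne
    rw [Polynomial.coeff_C_mul, Polynomial.coeff_X_pow,
      if_neg (by simp at hm; omega), mul_zero]
  · intro hmem
    simp at hmem
    omega

lemma qv_natDegree_le (n : ℕ) (P : Polynomial ℂ) :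
    (qv n P).natDegree ≤ P.natDegree := by
  unfold qv
  apply le_trans (Polynomial.natDegree_add_le _ _)
  rw [max_le_iff]
  refine ⟨by simp, ?_⟩
  apply le_trans (Polynomial.natDegree_sum_le _ _)
  rw [Finset.fold_max_le]
  refine ⟨by omega, ?_⟩
  intro m hm
  simp only [Finset.mem_range] at hm
  apply le_trans (Polynomial.natDegree_C_mul_le _ _)
  rw [Polynomial.natDegree_X_pow]
  omega

lemma qv_natDegree (n : ℕ) {P : Polynomial ℂ} (hn : 1 ≤ n) (hP : P ≠ 0) :
    (qv n P).natDegree = P.natDegree ∧ qv n P ≠ 0 := by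
  have hlc : P.coeff P.natDegree ≠ 0 := Polynomial.leadingCoeff_ne_zero.2 hP
  have hcoeff : (qv n P).coeff P.natDegree ≠ 0 := by
    by_cases h1 : 1 ≤ P.natDegree
    · rw [qv_coeff_nd n P h1]
      apply mul_ne_zero hlc
      apply pow_ne_zero
      exact_mod_cast (by omega : n ≠ 0)
    · have h0 : P.natDegree = 0 := by omega
      unfold qv
      rw [h0, Polynomial.coeff_add, Polynomial.coeff_C, if_pos rfl]
      rw [h0] at hlc
      simpa using hlc
  constructor
  · exact Nat.le_antisymm (qv_natDegree_le n P) (Polynomial.le_natDegree_of_ne_zero hcoeff)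
  · intro h0
    rw [h0] at hcoeff
    simp at hcoeff

lemma qv_entry (n : ℕ) (P : Polynomial ℂ) {Y : Type} [Fintype Y] [DecidableEq Y]
    (M : Matrix Y Y ℂ) (q q' : Y) :
    (Polynomial.aeval M (qv n P)) q q'
      = P.coeff 0 * (1 : Matrix Y Y ℂ) q q'
        + ∑ m ∈ Finset.range P.natDegree,
          P.coeff (m+1) * (n:ℂ)^m * ((M^(m+1)) q q') := by
  unfold qv
  rw [map_add, map_sum]
  rw [Matrix.add_apply, Matrix.sum_apply]
  congr 1
  · rw [Polynomial.aeval_C, Matrix.algebraMap_matrix_apply]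
    rw [Matrix.one_apply]
    by_cases h : q = q' <;> simp [h]
  · apply Finset.sum_congr rfl
    intro m _
    rw [_root_.map_mul, Polynomial.aeval_C, map_pow, Polynomial.aeval_X,
      Matrix.mul_apply]
    simp only [Matrix.algebraMap_matrix_apply, ite_mul, zero_mul]
    rw [Finset.sum_ite_eq]
    simp [mul_assoc]


lemma qs_ppoly : (QS C).IsPPoly := by
  have hg3 := three_le_g C.hDR C.hg
  obtain ⟨v, hdeg, hval⟩ := C.hDR.ppoly
  refine ⟨fun i => qv (S.k g + 1) (v i), ?_, ?_⟩
  · intro i hi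
    have hup := hdeg i (by omega)
    have h := qv_natDegree (S.k g + 1) (P := v i) (by omega) hup.2
    exact ⟨by rw [h.1, hup.1], h.2⟩
  · intro i hi
    have hreli : i ≤ g := by omega
    have hup := hdeg i hreli
    ext q q'
    obtain ⟨x, y, hx, hy, hdxy⟩ := exists_reps C (rfl : (Dgr C).dist q q' = _)
    have hentry : AssocScheme.adjMat (S.R i) x y
        = (Polynomial.aeval (AssocScheme.adjMat (S.R 1)) (v i)) x y :=
      (Matrix.ext_iff.mpr (hval i hreli)) x y
    rw [Polynomial.aeval_eq_sum_range] at hentry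
    simp only [Matrix.sum_apply, Matrix.smul_apply, smul_eq_mul] at hentry
    rw [Finset.sum_range_succ'] at hentry
    have hLHS : AssocScheme.adjMat ((QS C).R i) q q'
        = AssocScheme.adjMat (S.R i) x y := by
      rw [adjMat_apply, adjMat_apply]
      apply if_congr _ rfl rfl
      show QR C i q q' ↔ S.R i x y
      rw [C.hDR.rel]
      unfold QR
      rw [hdxy]
      exact ⟨fun h => ⟨by omega, h.2⟩, fun h => ⟨hi, h.2⟩⟩
    have hone : (1 : Matrix X X ℂ) x y = (1 : Matrix (QuotX C) (QuotX C) ℂ) q q' := by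
      rw [Matrix.one_apply, Matrix.one_apply]
      apply if_congr _ rfl rfl
      constructor
      · rintro rfl
        rw [← hx, ← hy]
      · intro h
        rw [h] at hdxy
        rw [DGraph.dist_self] at hdxy
        exact eq_of_dist_eq_zero (C.hDR.sc x y) hdxy
    rw [hLHS, hentry, qv_entry, add_comm]
    congr 1
    · rw [pow_zero, hone]
    · apply Finset.sum_congr rfl
      intro m _
      rw [Apow C (m+1) (by omega) x y, hx, hy,
        (show m + 1 - 1 = m from rfl)]
      ring

lemma qs_nonsymm : (QS C).NonSymmetric := by
  have hg3 := three_le_g C.hDR C.hg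
  refine ⟨1, by omega, ?_⟩
  show (if (1:ℕ) = 0 then 0 else if 1 ≤ g - 1 then g - 1 else 1) ≠ 1
  rw [if_neg one_ne_zero, if_pos (by omega : (1:ℕ) ≤ g - 1)]
  omega

lemma qs_isdrd : IsDRDGraph (Dgr C) (g - 1) (QS C) :=
  ⟨sc' C, simple' C, fun i q q' => Iff.rfl, qs_ppoly C, qs_nonsymm C⟩


noncomputable def fibEquiv (q : QuotX C) : {z : X // qmk C z = q} ≃ Fin (S.k g + 1) :=
  Fintype.equivFinOfCardEq (by rw [← Nat.card_eq_fintype_card]; exact fiber_card C q)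

noncomputable def bigEquiv : X ≃ QuotX C × Fin (S.k g + 1) :=
  (Equiv.sigmaFiberEquiv (qmk C)).symm.trans
    ((Equiv.sigmaCongrRight (fun q => fibEquiv C q)).trans
      (Equiv.sigmaEquivProd _ _))

lemma bigEquiv_fst (z : X) : ((bigEquiv C) z).1 = qmk C z := rfl

lemma part1_iso : DGraphIso (DGraph.mk (S.R 1)) ((Dgr C).lexEmpty (S.k g + 1)) := by
  refine ⟨bigEquiv C, fun x y => ?_⟩
  show (G).adj x y ↔ (Dgr C).adj ((bigEquiv C) x).1 ((bigEquiv C) y).1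
  rw [bigEquiv_fst, bigEquiv_fst]
  exact (Dadj' C x y).symm

section Part2

lemma out_unique (hk : S.k 1 = S.k g + 1) (q : QuotX C) :
    ∃! q' : QuotX C, (Dgr C).adj q q' := by
  have hg3 := three_le_g C.hDR C.hg
  obtain ⟨x, rfl⟩ := qmk_surj C q
  have hcard : Nat.card {z : X // (G).dist x z = 1} = S.k 1 := (k_spec C.hDR (by omega) x).symm
  have hpos : Nat.card {z : X // (G).dist x z = 1} ≠ 0 := by rw [hcard, hk]; omega
  obtain ⟨⟨⟨w, hw⟩⟩, -⟩ := Nat.card_ne_zero.1 hpos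
  have hadj : (G).adj x w := adj_of_dist_eq_one (C.hDR.sc x w) hw
  refine ⟨qmk C w, (Dadj' C x w).2 hadj, ?_⟩
  intro q' hq'
  obtain ⟨w', rfl⟩ := qmk_surj C q'
  have hadj' : (G).adj x w' := (Dadj' C x w').1 hq'
  have hsub : Finset.univ.filter (fun z : X => qmk C z = qmk C w)
      ⊆ Finset.univ.filter (fun z : X => (G).dist x z = 1) := by
    intro z hz
    simp only [Finset.mem_filter] at hz ⊢
    refine ⟨Finset.mem_univ z, ?_⟩
    have hrel : rel' S w z := rel'_symm C ((qmk_eq_iff C z w).1 hz.2)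
    exact dist_eq_one_of_adj C.hDR.simple (nbr_in C hrel hadj)
  have hc1 : (Finset.univ.filter (fun z : X => qmk C z = qmk C w)).card = S.k g + 1 :=
    class_card C (qmk C w)
  have hc2 : (Finset.univ.filter (fun z : X => (G).dist x z = 1)).card = S.k g + 1 := by
    rw [← hk, ← hcard, natCard_filter]
    congr!
  have heq : Finset.univ.filter (fun z : X => qmk C z = qmk C w)
      = Finset.univ.filter (fun z : X => (G).dist x z = 1) :=
    Finset.eq_of_subset_of_card_le hsub (by omega)
  have hw' : w' ∈ Finset.univ.filter (fun z : X => (G).dist x z = 1) := by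
    simp only [Finset.mem_filter]
    exact ⟨Finset.mem_univ w', dist_eq_one_of_adj C.hDR.simple hadj'⟩
  rw [← heq, Finset.mem_filter] at hw'
  exact hw'.2

variable (hk : S.k 1 = S.k g + 1)

noncomputable def nxt : QuotX C → QuotX C := fun q => (out_unique C hk q).exists.choose

lemma nxt_adj (q : QuotX C) : (Dgr C).adj q (nxt C hk q) :=
  (out_unique C hk q).exists.choose_spec

lemma adj_iff_nxt (q q' : QuotX C) : (Dgr C).adj q q' ↔ q' = nxt C hk q := by
  constructor
  · intro h
    obtain ⟨w, hw1, hw2⟩ := out_unique C hk q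
    rw [hw2 q' h, hw2 (nxt C hk q) (nxt_adj C hk q)]
  · rintro rfl
    exact nxt_adj C hk q

lemma walk_nxt : ∀ {m : ℕ} {q q' : QuotX C}, (Dgr C).walk m q q' →
    q' = (nxt C hk)^[m] q := by
  intro m
  induction m with
  | zero => intro q q' h; exact h.symm
  | succ m ih =>
    rintro q q' ⟨z, hz, hw⟩
    rw [Function.iterate_succ_apply]
    rw [← (adj_iff_nxt C hk q z).1 hz]
    exact ih hw

lemma walk_to_iterate : ∀ (m : ℕ) (q : QuotX C), (Dgr C).walk m q ((nxt C hk)^[m] q) := by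
  intro m
  induction m with
  | zero => intro q; rfl
  | succ m ih =>
    intro q
    rw [Function.iterate_succ_apply]
    exact ⟨nxt C hk q, nxt_adj C hk q, ih (nxt C hk q)⟩

variable (q0 : QuotX C)

lemma period_exists : ∃ m, 0 < m ∧ (nxt C hk)^[m] q0 = q0 := by
  obtain ⟨m, hm⟩ := sc' C (nxt C hk q0) q0
  refine ⟨m + 1, by omega, ?_⟩
  rw [Function.iterate_succ_apply]
  exact (walk_nxt C hk hm).symm

noncomputable def Lp : ℕ := sInf {m | 0 < m ∧ (nxt C hk)^[m] q0 = q0}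

lemma Lp_spec : 0 < Lp C hk q0 ∧ (nxt C hk)^[Lp C hk q0] q0 = q0 :=
  Nat.sInf_mem (period_exists C hk q0)

lemma Lp_min {m : ℕ} (hm : 0 < m) (h : (nxt C hk)^[m] q0 = q0) : Lp C hk q0 ≤ m :=
  Nat.sInf_le ⟨hm, h⟩

lemma iter_mod : ∀ m : ℕ, (nxt C hk)^[m] q0 = (nxt C hk)^[m % Lp C hk q0] q0 := by
  intro m
  induction m using Nat.strong_induction_on with
  | _ m ih =>
    by_cases hlt : m < Lp C hk q0
    · rw [Nat.mod_eq_of_lt hlt]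
    · have hpos := (Lp_spec C hk q0).1
      have hle : Lp C hk q0 ≤ m := by omega
      have h1 : m = (m - Lp C hk q0) + Lp C hk q0 := by omega
      rw [h1, Function.iterate_add_apply, (Lp_spec C hk q0).2]
      rw [ih (m - Lp C hk q0) (by omega)]
      congr 1
      rw [Nat.add_mod_right]

lemma iter_inj {a b : ℕ} (hab : a < b) (hb : b < Lp C hk q0) :
    (nxt C hk)^[a] q0 ≠ (nxt C hk)^[b] q0 := by
  intro hcon
  have h1 : (nxt C hk)^[b - a] ((nxt C hk)^[a] q0) = (nxt C hk)^[a] q0 := by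
    rw [← Function.iterate_add_apply, (by omega : b - a + a = b)]
    exact hcon.symm
  obtain ⟨t, ht⟩ := sc' C ((nxt C hk)^[a] q0) q0
  have ht' : q0 = (nxt C hk)^[t] ((nxt C hk)^[a] q0) := walk_nxt C hk ht
  have h2 : (nxt C hk)^[b - a] q0 = q0 := by
    rw [ht', ← Function.iterate_add_apply, Nat.add_comm, Function.iterate_add_apply, h1]
  have := Lp_min C hk q0 (by omega) h2
  omega

lemma iter_surj (q : QuotX C) : ∃ m, m < Lp C hk q0 ∧ (nxt C hk)^[m] q0 = q := by
  obtain ⟨m, hm⟩ := sc' C q0 q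
  refine ⟨m % Lp C hk q0, Nat.mod_lt _ (Lp_spec C hk q0).1, ?_⟩
  rw [← iter_mod C hk q0 m]
  exact (walk_nxt C hk hm).symm

lemma qdist_iter {j : ℕ} (hj : j < Lp C hk q0) :
    (Dgr C).dist q0 ((nxt C hk)^[j] q0) = j := by
  apply Nat.le_antisymm
  · exact dist_le_of_walk (walk_to_iterate C hk j q0)
  · have hw := walk_dist (sc' C q0 ((nxt C hk)^[j] q0))
    set m := (Dgr C).dist q0 ((nxt C hk)^[j] q0) with hm
    have h1 : (nxt C hk)^[j] q0 = (nxt C hk)^[m] q0 := walk_nxt C hk hw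
    rw [iter_mod C hk q0 m] at h1
    have hmod : m % Lp C hk q0 = j := by
      by_contra hne
      rcases Nat.lt_or_ge (m % Lp C hk q0) j with hlt | hge
      · exact iter_inj C hk q0 hlt hj h1.symm
      · exact iter_inj C hk q0 (by omega) (Nat.mod_lt _ (Lp_spec C hk q0).1) h1
    have := Nat.mod_le m (Lp C hk q0)
    omega

lemma Lp_eq_g : Lp C hk q0 = g := by
  have hg3 := three_le_g C.hDR C.hg
  have hpos := (Lp_spec C hk q0).1
  apply Nat.le_antisymm
  · -- L ≤ g : otherwise a pair at quotient distance g > g-1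
    by_contra hgt
    have hj : (Dgr C).dist q0 ((nxt C hk)^[g] q0) = g := qdist_iter C hk q0 (by omega)
    have := qdist_le C q0 ((nxt C hk)^[g] q0)
    omega
  · -- g ≤ L : lift the closed walk
    obtain ⟨x0, hx0⟩ := qmk_surj C q0
    have hw : (Dgr C).walk (Lp C hk q0) (qmk C x0) q0 := by
      rw [hx0]
      have := walk_to_iterate C hk (Lp C hk q0) q0
      rwa [(Lp_spec C hk q0).2] at this
    obtain ⟨y, hy, hwy⟩ := wlift C hw
    by_cases hyx : y = x0
    · subst hyx
      exact girth_le C.hDR C.hg hpos hwy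
    · have hrel : rel' S x0 y := by
        apply rel'_symm C
        exact (qmk_eq_iff C y x0).1 (by rw [hy, hx0])
      have hdist : (G).dist x0 y = g := by
        rcases hrel with h | h
        · exact h
        · exact absurd h.symm hyx
      have := dist_le_of_walk hwy
      omega

end Part2


noncomputable def cycEquiv (hk : S.k 1 = S.k g + 1) (q0 : QuotX C) : ZMod g ≃ QuotX C :=
  haveI : NeZero g := ⟨by have := three_le_g C.hDR C.hg; omega⟩
  Equiv.ofBijective (fun k => (nxt C hk)^[k.val] q0) (by
    have hg3 := three_le_g C.hDR C.hg
    constructor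
    · intro k1 k2 hkk
      simp only at hkk
      have h1 : k1.val < Lp C hk q0 := by rw [Lp_eq_g C hk q0]; exact ZMod.val_lt k1
      have h2 : k2.val < Lp C hk q0 := by rw [Lp_eq_g C hk q0]; exact ZMod.val_lt k2
      have hval : k1.val = k2.val := by
        rcases Nat.lt_trichotomy k1.val k2.val with h | h | h
        · exact absurd hkk (iter_inj C hk q0 h h2)
        · exact h
        · exact absurd hkk.symm (iter_inj C hk q0 h h1)
      exact ZMod.val_injective g hval
    · intro q
      obtain ⟨m, hm, hq⟩ := iter_surj C hk q0 q
      rw [Lp_eq_g C hk q0] at hm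
      refine ⟨(m : ZMod g), ?_⟩
      simp only
      rw [ZMod.val_natCast, Nat.mod_eq_of_lt hm]
      exact hq)

lemma cycEquiv_adj (hk : S.k 1 = S.k g + 1) (q0 : QuotX C) (k k' : ZMod g) :
    (Dgr C).adj (cycEquiv C hk q0 k) (cycEquiv C hk q0 k')
      ↔ (cycleDGraph g).adj k k' := by
  have hg3 := three_le_g C.hDR C.hg
  haveI : NeZero g := ⟨by omega⟩
  haveI : Fact (1 < g) := ⟨by omega⟩
  have happ : ∀ k : ZMod g, cycEquiv C hk q0 k = (nxt C hk)^[k.val] q0 := fun _ => rfl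
  show _ ↔ k' = k + 1
  rw [adj_iff_nxt C hk]
  have hstep : nxt C hk (cycEquiv C hk q0 k) = cycEquiv C hk q0 (k + 1) := by
    rw [happ, happ, ← Function.iterate_succ_apply' (nxt C hk)]
    have hv : (k + 1).val = (k.val + 1) % g := by
      rw [ZMod.val_add, ZMod.val_one]
    rw [hv]
    have hmod := iter_mod C hk q0 (k.val + 1)
    rw [Lp_eq_g C hk q0] at hmod
    exact hmod
  rw [hstep]
  constructor
  · intro h
    exact (cycEquiv C hk q0).injective h
  · rintro rfl
    rfl

include C in
lemma part2_iso (hk : S.k 1 = S.k g + 1) :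
    DGraphIso (DGraph.mk (S.R 1)) ((cycleDGraph g).lexEmpty (S.k g + 1)) := by
  obtain ⟨x0, -⟩ := girth_attained C.hDR C.hg
  set q0 := qmk C x0 with hq0
  refine ⟨(bigEquiv C).trans
    (Equiv.prodCongr (cycEquiv C hk q0).symm (Equiv.refl _)), fun x y => ?_⟩
  show (G).adj x y ↔ (cycleDGraph g).adj
    ((cycEquiv C hk q0).symm ((bigEquiv C x).1)) ((cycEquiv C hk q0).symm ((bigEquiv C y).1))
  rw [bigEquiv_fst, bigEquiv_fst]
  rw [← cycEquiv_adj C hk q0, Equiv.apply_symm_apply, Equiv.apply_symm_apply]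
  exact Dadj' C x y

end Stmt19Aux


theorem stmt19 {X : Type} [Fintype X] {g : ℕ} (S : AssocScheme X g)
    (hDR : IsDRDGraph (DGraph.mk (S.R 1)) g S)
    (hg : (DGraph.mk (S.R 1)).girth = g)
    (hd : (DGraph.mk (S.R 1)).diam = g) :
    (∃ (Y : Type) (inst : Fintype Y), ∃ (Δ : DGraph Y),
      ∃ (S' : @AssocScheme Y inst (g - 1)), ∃ n : ℕ,
        0 < n ∧ @IsDRDGraph Y inst Δ (g - 1) S' ∧ Δ.diam = g - 1 ∧
        DGraphIso (DGraph.mk (S.R 1)) (Δ.lexEmpty n)) ∧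
    (S.k 1 = S.k g + 1 →
      ∃ n : ℕ, 0 < n ∧
        DGraphIso (DGraph.mk (S.R 1)) ((cycleDGraph g).lexEmpty n)) := by
  have C : Stmt19Aux.Ctx S := ⟨hDR, hg, hd⟩
  constructor
  · exact ⟨Stmt19Aux.QuotX C, inferInstance, Stmt19Aux.Dgr C, Stmt19Aux.QS C,
      S.k g + 1, Nat.succ_pos _, Stmt19Aux.qs_isdrd C, Stmt19Aux.diam' C,
      Stmt19Aux.part1_iso C⟩
  · intro hk
    exact ⟨S.k g + 1, Nat.succ_pos _, Stmt19Aux.part2_iso C hk⟩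
end
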